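/- arXiv:2208.12314 — 9 statements merged into one kernel-verified Lean document; each statement's English description precedes it below -/
import Mathlib

section
/- Let n ≥ 1, let A0 be a real n×n matrix, E0 a real n×1 column vector, C0 a real 1×n row vector, and suppose (A0, C0) is observable, i.e., the observability matrix S0 whose rows are C0, C0·A0, …, C0·A0^{n−1} is invertible. Then the following two statements are equivalent: (i) for every z ∈ ℂ, the complex (n+1)×(n+1) matrix [[A0 − z·I_n, E0], [C0, 0]] (entries coerced from ℝ to ℂ) has rank n+1; (ii) C0·A0^{i}·E0 = 0 for every i with 0 ≤ i ≤ n−2, and C0·A0^{n−1}·E0 ≠ 0. -/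
open Matrix

/-- The observability matrix of the pair `(M, c)`: rows `c, c*M, …, c*M^(m-1)`. -/
noncomputable def obsMat {m : ℕ} (M : Matrix (Fin m) (Fin m) ℝ)
    (c : Matrix (Fin 1) (Fin m) ℝ) : Matrix (Fin m) (Fin m) ℝ :=
  Matrix.of fun i j => (c * M ^ (i : ℕ)) 0 j

/-- The Rosenbrock system matrix `[[A0 - z I, E0], [C0, 0]]` with entries coerced to `ℂ`. -/
noncomputable def rosenbrock (n : ℕ) (A0 : Matrix (Fin n) (Fin n) ℝ)
    (E0 : Matrix (Fin n) (Fin 1) ℝ) (C0 : Matrix (Fin 1) (Fin n) ℝ) (z : ℂ) :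
    Matrix (Fin n ⊕ Fin 1) (Fin n ⊕ Fin 1) ℂ :=
  Matrix.fromBlocks (A0.map Complex.ofReal - z • 1) (E0.map Complex.ofReal)
    (C0.map Complex.ofReal) 0

/-!
Writing `N(X) = C0 · adj(X - A0) · E0`, a bordered-determinant expansion gives
`det [[A0 - z, E0], [C0, 0]] = (-1)^n N(z)`. From Cayley–Hamilton and
`χ(X) - χ(A0) = (X - A0) · Σ_j c_j Σ_{i<j} X^i A0^(j-1-i)` we get
`adj(X - A0) = Σ_j c_j Σ_{i<j} X^i A0^(j-1-i)`, so the coefficient of `X^k` in `N` is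
`Σ_{j>k} c_j h_(j-1-k)`, where `χ = Σ c_j X^j` and `h_i = C0 A0^i E0` are the Markov parameters.
As `ℂ` is algebraically closed, (i) says that `N` is a nonzero constant, and since `c_n = 1`
this triangular system is equivalent to `h_0 = … = h_(n-2) = 0`, and then `N = h_(n-1)`.
-/

open Polynomial Finset

theorem Matrix.rank_eq_card_iff_det_ne_zero {K m : Type*} [Field K] [Fintype m] [DecidableEq m]
    (A : Matrix m m K) : A.rank = Fintype.card m ↔ A.det ≠ 0 := by
  rw [rank_eq_finrank_span_cols, ← isUnit_iff_ne_zero, ← isUnit_iff_isUnit_det,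
    ← linearIndependent_cols_iff_isUnit, linearIndependent_iff_card_eq_finrank_span, eq_comm]
  rfl

theorem Matrix.det_fromBlocks_zero₂₂_of_isLeftRegular {R m : Type*} [CommRing R] [Fintype m]
    [DecidableEq m] (A : Matrix m m R) (b : Matrix m (Fin 1) R) (c : Matrix (Fin 1) m R)
    (hA : IsLeftRegular A.det) :
    (fromBlocks A b c 0).det = -(c * adjugate A * b) 0 0 := by
  apply hA
  have key : fromBlocks 1 0 (-(c * adjugate A)) (A.det • 1) * fromBlocks A b c 0
      = fromBlocks A b 0 (-(c * adjugate A * b)) := by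
    simp [fromBlocks_multiply, Matrix.mul_assoc, adjugate_mul]
  have hdet := congrArg det key
  rw [det_mul, det_fromBlocks_zero₁₂, det_fromBlocks_zero₂₁] at hdet
  simpa [det_fin_one] using hdet

theorem Commute.sum_coeff_smul_geom_sum₂_mul {R S : Type*} [CommRing R] [Ring S] [Algebra R S]
    {x y : S} (h : Commute x y) (p : R[X]) {N : ℕ} (hN : p.natDegree < N) :
    (∑ j ∈ range N, p.coeff j • ∑ i ∈ range j, x ^ i * y ^ (j - 1 - i)) * (x - y)
      = aeval x p - aeval y p := by
  simp_rw [Finset.sum_mul, smul_mul_assoc, h.geom_sum₂_mul, smul_sub, Finset.sum_sub_distrib,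
    aeval_eq_sum_range' hN]

theorem Matrix.adjugate_charmatrix {R m : Type*} [CommRing R] [Nontrivial R] [Fintype m]
    [DecidableEq m] (A : Matrix m m R) :
    adjugate (charmatrix A) = ∑ j ∈ range (Fintype.card m + 1), A.charpoly.coeff j •
      ∑ i ∈ range j, (X ^ i : R[X]) • (A ^ (j - 1 - i)).map C := by
  set x : Matrix m m R[X] := scalar m X
  set y : Matrix m m R[X] := (C : R →+* R[X]).mapMatrix A
  have hxy : Commute x y := scalar_commute _ (fun _ => Commute.all _ _) _
  have hterm : ∀ i k, (X ^ i : R[X]) • (A ^ k).map C = x ^ i * y ^ k := by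
    intro i k
    rw [← map_pow, ← map_pow, scalar_apply, ← smul_eq_diagonal_mul]
    rfl
  have hx : aeval x A.charpoly = A.charpoly • 1 := by
    rw [show x = algebraMap R[X] _ X from rfl, aeval_algebraMap_apply, aeval_X_left_apply,
      Algebra.algebraMap_eq_smul_one]
  have hy : aeval y A.charpoly = 0 := by
    rw [show y = (Algebra.ofId R R[X]).mapMatrix A from rfl, aeval_algHom_apply,
      aeval_self_charpoly, map_zero]
  have hmul : (∑ j ∈ range (Fintype.card m + 1), A.charpoly.coeff j •
      ∑ i ∈ range j, x ^ i * y ^ (j - 1 - i)) * charmatrix A = A.charpoly • 1 := by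
    rw [show charmatrix A = x - y from rfl, hxy.sum_coeff_smul_geom_sum₂_mul _
      (by rw [charpoly_natDegree_eq_dim]; omega), hx, hy, sub_zero]
  have hreg : IsRegular (charmatrix A) :=
    isRegular_of_isLeftRegular_det A.charpoly_monic.isRegular.left
  apply hreg.right
  simp only [hterm]
  rw [hmul, adjugate_mul]
  rfl

noncomputable def transferNumerator {R m : Type*} [CommRing R] [Fintype m] [DecidableEq m]
    (A : Matrix m m R) (b : Matrix m (Fin 1) R) (c : Matrix (Fin 1) m R) : R[X] :=
  (c.map C * adjugate (charmatrix A) * b.map C) 0 0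

theorem coeff_transferNumerator {R m : Type*} [CommRing R] [Nontrivial R] [Fintype m]
    [DecidableEq m] (A : Matrix m m R) (b : Matrix m (Fin 1) R) (c : Matrix (Fin 1) m R)
    (k : ℕ) : (transferNumerator A b c).coeff k
      = ∑ j ∈ Ioc k (Fintype.card m), A.charpoly.coeff j * (c * A ^ (j - 1 - k) * b) 0 0 := by
  have hentry : ∀ M : Matrix m m R, (c.map C * M.map C * b.map C) 0 0 = C ((c * M * b) 0 0) := by
    intro M
    rw [← Matrix.map_mul, ← Matrix.map_mul]
    rfl
  simp only [transferNumerator, adjugate_charmatrix, Matrix.mul_sum, Matrix.sum_mul,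
    Matrix.mul_smul, Matrix.smul_mul, Matrix.sum_apply, Matrix.smul_apply, hentry, smul_eq_mul,
    X_pow_mul, C_mul_X_pow_eq_monomial, finsetSum_coeff, coeff_smul, coeff_monomial, sum_ite_eq',
    mem_range, mul_ite, mul_zero, ← sum_filter]
  congr 1
  ext j
  simp only [mem_filter, mem_range, mem_Ioc]
  omega

theorem det_rosenbrock (n : ℕ) (A0 : Matrix (Fin n) (Fin n) ℝ) (E0 : Matrix (Fin n) (Fin 1) ℝ)
    (C0 : Matrix (Fin 1) (Fin n) ℝ) (z : ℂ) :
    (rosenbrock n A0 E0 C0 z).det = (-1) ^ n * aeval z (transferNumerator A0 E0 C0) := by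
  have hP : rosenbrock n A0 E0 C0 z = (aeval z : ℝ[X] →ₐ[ℝ] ℂ).mapMatrix
      (-fromBlocks (charmatrix A0) (-E0.map C) (-C0.map C) 0) := by
    ext (i | i) (j | j)
    · by_cases h : i = j <;> simp [rosenbrock, h]
    all_goals simp [rosenbrock]
  have hreg : IsLeftRegular (charmatrix A0).det := A0.charpoly_monic.isRegular.left
  rw [hP, ← AlgHom.map_det, det_neg, det_fromBlocks_zero₂₂_of_isLeftRegular _ _ _ hreg]
  simp [transferNumerator, Matrix.neg_mul, Matrix.mul_neg]
  ring

theorem sum_Ioc_mul_sub_eq_zero_iff {R : Type*} [Semiring R] {c h : ℕ → R} {m : ℕ}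
    (hc : c (m + 1) = 1) :
    (∀ k, 1 ≤ k → ∑ j ∈ Ioc k (m + 1), c j * h (j - 1 - k) = 0) ↔ ∀ i < m, h i = 0 := by
  constructor
  · intro H i
    induction i using Nat.strong_induction_on with
    | _ i ih =>
      intro hi
      have hk := H (m - i) (by omega)
      rwa [sum_Ioc_succ_top (by omega), hc, one_mul, show m + 1 - 1 - (m - i) = i by omega,
        sum_eq_zero fun j hj => by
          simp only [mem_Ioc] at hj
          rw [ih _ (by omega) (by omega), mul_zero], zero_add] at hk
  · intro H k hk
    exact sum_eq_zero fun j hj => by rw [H _ (by simp at hj; omega), mul_zero]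

theorem sum_Ioc_zero_mul_sub_eq {R : Type*} [Semiring R] {c h : ℕ → R} {m : ℕ}
    (hc : c (m + 1) = 1) (H : ∀ i < m, h i = 0) :
    ∑ j ∈ Ioc 0 (m + 1), c j * h (j - 1) = h m := by
  rw [sum_Ioc_succ_top (Nat.zero_le m), hc, one_mul, Nat.add_sub_cancel,
    sum_eq_zero fun j hj => by rw [H _ (by simp at hj; omega), mul_zero], zero_add]

theorem Polynomial.degree_eq_zero_iff_coeff {R : Type*} [Semiring R] {p : R[X]} :
    p.degree = 0 ↔ p.coeff 0 ≠ 0 ∧ ∀ k, 1 ≤ k → p.coeff k = 0 := by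
  constructor
  · intro hp
    refine ⟨fun h0 => ?_, fun k hk => coeff_eq_zero_of_degree_lt (by rw [hp]; exact_mod_cast hk)⟩
    rw [eq_C_of_degree_eq_zero hp, h0, C_0, degree_zero] at hp
    exact WithBot.bot_ne_zero hp
  · rintro ⟨h0, hk⟩
    have hC : p = C (p.coeff 0) := by
      ext (_ | k)
      · simp
      · simp [hk (k + 1) (by omega)]
    rw [hC, degree_C h0]

theorem Polynomial.forall_aeval_ne_zero_iff {K L : Type*} [Field K] [Field L] [IsAlgClosed L]
    [Algebra K L] (p : K[X]) : (∀ z : L, aeval z p ≠ 0) ↔ p.degree = 0 := by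
  constructor
  · intro h
    by_contra hp
    obtain ⟨z, hz⟩ := IsAlgClosed.exists_aeval_eq_zero L p hp
    exact h z hz
  · intro hp z
    rw [eq_C_of_degree_eq_zero hp, aeval_C, _root_.map_ne_zero]
    exact (degree_eq_zero_iff_coeff.1 hp).1

theorem rank_rosenbrock_eq_iff (n : ℕ) (A0 : Matrix (Fin n) (Fin n) ℝ)
    (E0 : Matrix (Fin n) (Fin 1) ℝ) (C0 : Matrix (Fin 1) (Fin n) ℝ) (z : ℂ) :
    (rosenbrock n A0 E0 C0 z).rank = n + 1 ↔ aeval z (transferNumerator A0 E0 C0) ≠ 0 := by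
  have h := (rosenbrock n A0 E0 C0 z).rank_eq_card_iff_det_ne_zero
  rwa [Fintype.card_sum, Fintype.card_fin, Fintype.card_fin, det_rosenbrock,
    mul_ne_zero_iff, and_iff_right (pow_ne_zero _ (neg_ne_zero.2 one_ne_zero))] at h

theorem stmt0_general (n : ℕ) (hn : 1 ≤ n)
    (A0 : Matrix (Fin n) (Fin n) ℝ) (E0 : Matrix (Fin n) (Fin 1) ℝ)
    (C0 : Matrix (Fin 1) (Fin n) ℝ) :
    (∀ z : ℂ, (rosenbrock n A0 E0 C0 z).rank = n + 1)
      ↔ ((∀ i : ℕ, i < n - 1 → (C0 * A0 ^ i * E0) 0 0 = 0)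
          ∧ (C0 * A0 ^ (n - 1) * E0) 0 0 ≠ 0) := by
  obtain ⟨m, rfl⟩ : ∃ m, n = m + 1 := ⟨n - 1, by omega⟩
  have hc : A0.charpoly.coeff (m + 1) = 1 := by
    simpa using A0.charpoly_monic.coeff_natDegree
  calc (∀ z : ℂ, (rosenbrock (m + 1) A0 E0 C0 z).rank = m + 1 + 1)
      ↔ ∀ z : ℂ, aeval z (transferNumerator A0 E0 C0) ≠ 0 :=
        forall_congr' (rank_rosenbrock_eq_iff _ _ _ _)
    _ ↔ (transferNumerator A0 E0 C0).degree = 0 := forall_aeval_ne_zero_iff _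
    _ ↔ (transferNumerator A0 E0 C0).coeff 0 ≠ 0 ∧
        ∀ k, 1 ≤ k → (transferNumerator A0 E0 C0).coeff k = 0 := degree_eq_zero_iff_coeff
    _ ↔ _ := by
      have hlow := sum_Ioc_mul_sub_eq_zero_iff (h := fun i => (C0 * A0 ^ i * E0) 0 0) hc
      have htop := sum_Ioc_zero_mul_sub_eq (h := fun i => (C0 * A0 ^ i * E0) 0 0) hc
      simp only [coeff_transferNumerator, Fintype.card_fin, Nat.sub_zero,
        Nat.add_sub_cancel] at hlow htop ⊢
      rw [hlow]
      exact ⟨fun ⟨h0, hz⟩ => ⟨hz, htop hz ▸ h0⟩, fun ⟨hz, h0⟩ => ⟨(htop hz).symm ▸ h0, hz⟩⟩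

theorem stmt0 (n : ℕ) (hn : 1 ≤ n)
    (A0 : Matrix (Fin n) (Fin n) ℝ) (E0 : Matrix (Fin n) (Fin 1) ℝ)
    (C0 : Matrix (Fin 1) (Fin n) ℝ)
    (hobs : IsUnit (obsMat A0 C0).det) :
    (∀ z : ℂ, (rosenbrock n A0 E0 C0 z).rank = n + 1)
      ↔ ((∀ i : ℕ, i < n - 1 → (C0 * A0 ^ i * E0) 0 0 = 0)
          ∧ (C0 * A0 ^ (n - 1) * E0) 0 0 ≠ 0) :=
  stmt0_general n hn A0 E0 C0
end

section
/- Let n ≥ 1 and let Ā0 be the n×n real companion matrix whose i-th row is the (i+1)-th standard basis row vector for 1 ≤ i ≤ n−1 and whose last row is an arbitrary real row vector (a_1, …, a_n). Let c = e_1ᵀ be the first standard basis row vector and let v ∈ ℝ^n be a column vector. Then for every z ∈ ℂ the complex (n+1)×(n+1) matrix [[Ā0 − z·I_n, v], [e_1ᵀ, 0]] has rank n+1 if and only if v_1 = v_2 = … = v_{n−1} = 0 and v_n ≠ 0. -/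
open Matrix

/-- The companion (observability-canonical) matrix whose `i`-th row (for `i+1 < n`)
is the `(i+1)`-th standard basis row vector and whose last row is `a`. -/
noncomputable def companionObs (n : ℕ) (a : Fin n → ℝ) : Matrix (Fin n) (Fin n) ℝ :=
  Matrix.of fun i j =>
    if (i : ℕ) + 1 = n then a j
    else if (j : ℕ) = (i : ℕ) + 1 then 1 else 0

namespace StmtAux

open Polynomial

noncomputable def Mfam (n : ℕ) (a v : Fin n → ℝ) (z : ℂ) :
    Matrix (Fin n ⊕ Fin 1) (Fin n ⊕ Fin 1) ℂ :=
  Matrix.fromBlocks ((companionObs n a).map Complex.ofReal - z • 1)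
    (Matrix.of fun i (_ : Fin 1) => (v i : ℂ))
    (Matrix.of fun (_ : Fin 1) (j : Fin n) => if (j : ℕ) = 0 then (1 : ℂ) else 0)
    0

lemma myrank_eq_card_iff_det_ne {m : Type*} [Fintype m] [DecidableEq m] (M : Matrix m m ℂ) :
    M.rank = Fintype.card m ↔ M.det ≠ 0 := by
  constructor
  · intro h hdet
    obtain ⟨w, hw, hMw⟩ := Matrix.exists_mulVec_eq_zero_iff.2 hdet
    have hrange : LinearMap.range M.mulVecLin = ⊤ := by
      apply Submodule.eq_top_of_finrank_eq
      rw [Matrix.rank] at h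
      rw [h, Module.finrank_fintype_fun_eq_card]
    have hsurj : Function.Surjective M.mulVecLin := LinearMap.range_eq_top.mp hrange
    have hinj : Function.Injective M.mulVecLin :=
      (LinearMap.injective_iff_surjective).mpr hsurj
    exact hw (hinj (by simpa [Matrix.mulVecLin_apply] using hMw))
  · intro h
    exact Matrix.rank_of_isUnit _ ((Matrix.isUnit_iff_isUnit_det _).2 (isUnit_iff_ne_zero.2 h))

lemma Mrow_mid (n : ℕ) (a v : Fin n → ℝ) (z : ℂ) (w : Fin n ⊕ Fin 1 → ℂ)
    (i : Fin n) (hi : (i : ℕ) + 1 < n) :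
    (Mfam n a v z *ᵥ w) (Sum.inl i)
      = w (Sum.inl ⟨(i : ℕ) + 1, hi⟩) - z * w (Sum.inl i) + (v i : ℂ) * w (Sum.inr 0) := by
  have hne : (i : ℕ) + 1 ≠ n := Nat.ne_of_lt hi
  have hcond : ∀ j : Fin n, ((j : ℕ) = (i : ℕ) + 1) = (j = ⟨(i : ℕ) + 1, hi⟩) := by
    intro j; apply propext; constructor
    · intro h; exact Fin.ext h
    · intro h; simp [h]
  simp only [Mfam, Matrix.mulVec, dotProduct, Fintype.sum_sum_type,
    Matrix.fromBlocks, Matrix.of_apply, Sum.elim_inl, Sum.elim_inr, Matrix.sub_apply,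
    Matrix.smul_apply, Matrix.map_apply, companionObs, Matrix.one_apply, smul_eq_mul,
    if_neg hne, hcond, apply_ite Complex.ofReal, Complex.ofReal_one, Complex.ofReal_zero,
    sub_mul, ite_mul, one_mul, zero_mul, mul_ite, mul_one, mul_zero,
    Finset.sum_sub_distrib, Finset.sum_ite_eq, Finset.sum_ite_eq', Finset.mem_univ, if_true,
    Fin.sum_univ_one]

lemma Mrow_last (n : ℕ) (a v : Fin n → ℝ) (z : ℂ) (w : Fin n ⊕ Fin 1 → ℂ)
    (i : Fin n) (hi : (i : ℕ) + 1 = n) :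
    (Mfam n a v z *ᵥ w) (Sum.inl i)
      = (∑ j : Fin n, (a j : ℂ) * w (Sum.inl j)) - z * w (Sum.inl i)
        + (v i : ℂ) * w (Sum.inr 0) := by
  simp only [Mfam, Matrix.mulVec, dotProduct, Fintype.sum_sum_type,
    Matrix.fromBlocks, Matrix.of_apply, Sum.elim_inl, Sum.elim_inr, Matrix.sub_apply,
    Matrix.smul_apply, Matrix.map_apply, companionObs, Matrix.one_apply, smul_eq_mul,
    if_pos hi, sub_mul, ite_mul, one_mul, zero_mul, mul_ite, mul_one, mul_zero,
    Finset.sum_sub_distrib, Finset.sum_ite_eq, Finset.sum_ite_eq', Finset.mem_univ, if_true,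
    Fin.sum_univ_one]

lemma Mrow_out (n : ℕ) (hn : 1 ≤ n) (a v : Fin n → ℝ) (z : ℂ) (w : Fin n ⊕ Fin 1 → ℂ)
    (k : Fin 1) :
    (Mfam n a v z *ᵥ w) (Sum.inr k) = w (Sum.inl ⟨0, hn⟩) := by
  have hcond : ∀ j : Fin n, ((j : ℕ) = 0) = (j = ⟨0, hn⟩) := by
    intro j; apply propext; constructor
    · intro h; exact Fin.ext h
    · intro h; simp [h]
  simp only [Mfam, Matrix.mulVec, dotProduct, Fintype.sum_sum_type,
    Matrix.fromBlocks, Matrix.of_apply, Sum.elim_inl, Sum.elim_inr, Matrix.zero_apply,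
    hcond, ite_mul, one_mul, zero_mul, Finset.sum_ite_eq, Finset.sum_ite_eq',
    Finset.mem_univ, if_true, Fin.sum_univ_one, mul_zero, add_zero,
    Finset.sum_const_zero]

noncomputable def Xp (vv : ℕ → ℂ) : ℕ → ℂ[X]
  | 0 => 0
  | k+1 => Polynomial.X * Xp vv k - Polynomial.C (vv k)

lemma Xp_zero (vv : ℕ → ℂ) (j : ℕ) (h0 : ∀ m, m < j → vv m = 0) :
    ∀ k, k ≤ j → Xp vv k = 0 := by
  intro k
  induction k with
  | zero => intro _; rfl
  | succ k ih =>
    intro hk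
    have h1 : Xp vv (k+1) = X * Xp vv k - C (vv k) := rfl
    rw [h1, ih (by omega), h0 k (by omega)]
    simp

lemma Xp_spec (vv : ℕ → ℂ) (j : ℕ) (h0 : ∀ m, m < j → vv m = 0) (t : ℕ) :
    (Xp vv (j+1+t)).natDegree ≤ t ∧ (Xp vv (j+1+t)).coeff t = -vv j := by
  induction t with
  | zero =>
    have h1 : Xp vv (j+1+0) = X * Xp vv j - C (vv j) := rfl
    rw [h1, Xp_zero vv j h0 j le_rfl, mul_zero, zero_sub]
    constructor
    · rw [natDegree_neg, natDegree_C]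
    · rw [coeff_neg, coeff_C, if_pos rfl]
  | succ t ih =>
    have h1 : Xp vv (j+1+(t+1)) = X * Xp vv (j+1+t) - C (vv (j+1+t)) := rfl
    constructor
    · rw [h1]
      refine le_trans (natDegree_sub_le _ _) ?_
      simp only [natDegree_C]
      refine max_le (le_trans natDegree_mul_le ?_) (by omega)
      simp only [natDegree_X]
      omega
    · rw [h1, coeff_sub, coeff_X_mul, coeff_C, if_neg (Nat.succ_ne_zero t), ih.2, sub_zero]

end StmtAux

open StmtAux Polynomial in
theorem stmt1 (n : ℕ) (hn : 1 ≤ n) (a : Fin n → ℝ) (v : Fin n → ℝ) :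
    (∀ z : ℂ,
      (Matrix.fromBlocks ((companionObs n a).map Complex.ofReal - z • 1)
          (Matrix.of fun i (_ : Fin 1) => (v i : ℂ))
          (Matrix.of fun (_ : Fin 1) (j : Fin n) => if (j : ℕ) = 0 then (1 : ℂ) else 0)
          0).rank = n + 1)
      ↔ ((∀ i : Fin n, (i : ℕ) < n - 1 → v i = 0) ∧ v ⟨n - 1, by omega⟩ ≠ 0) := by
  have hrw : (∀ z : ℂ,
      (Matrix.fromBlocks ((companionObs n a).map Complex.ofReal - z • 1)
          (Matrix.of fun i (_ : Fin 1) => (v i : ℂ))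
          (Matrix.of fun (_ : Fin 1) (j : Fin n) => if (j : ℕ) = 0 then (1 : ℂ) else 0)
          0).rank = n + 1)
      ↔ (∀ z : ℂ, (Mfam n a v z).det ≠ 0) := by
    apply forall_congr'
    intro z
    have h := myrank_eq_card_iff_det_ne (Mfam n a v z)
    simp only [Fintype.card_sum, Fintype.card_fin] at h
    exact h
  rw [hrw]
  set vv : ℕ → ℂ := fun k => if h : k < n then (v ⟨k, h⟩ : ℂ) else 0 with hvv
  have hvval : ∀ i : Fin n, vv (i : ℕ) = (v i : ℂ) := by
    intro i; simp [hvv, i.isLt]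
  constructor
  · -- hard direction
    intro h
    by_cases hex : ∃ i : Fin n, (i : ℕ) < n - 1 ∧ v i ≠ 0
    · exfalso
      -- pick minimal index
      have hexP : ∃ k : ℕ, k < n - 1 ∧ vv k ≠ 0 := by
        obtain ⟨i, hi1, hi2⟩ := hex
        exact ⟨(i : ℕ), hi1, by rw [hvval i]; exact_mod_cast hi2⟩
      classical
      set j := Nat.find hexP with hj
      obtain ⟨hjlt, hjne⟩ := Nat.find_spec hexP
      have hmin : ∀ m, m < j → vv m = 0 := by
        intro m hm
        have := Nat.find_min hexP hm
        push_neg at this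
        by_cases hm' : m < n - 1
        · exact this hm'
        · simp [hvv]; intro hmn; omega
      have hn2 : 2 ≤ n := by omega
      -- the polynomial F
      set F : ℂ[X] := (∑ j' : Fin n, C ((a j' : ℝ) : ℂ) * Xp vv (j' : ℕ))
          - X * Xp vv (n - 1) + C (vv (n - 1)) with hF
      have hxc : ∀ k : ℕ, k ≤ n - 1 → (Xp vv k).coeff (n - 1 - j) = 0 := by
        intro k hk
        rcases le_or_gt k j with hkj | hkj
        · rw [Xp_zero vv j hmin k hkj, coeff_zero]
        · have hkt : k = j + 1 + (k - j - 1) := by omega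
          rw [hkt]
          apply coeff_eq_zero_of_natDegree_lt
          have := (Xp_spec vv j hmin (k - j - 1)).1
          omega
      have hFc : F.coeff (n - 1 - j) = vv j := by
        have hsum : (∑ j' : Fin n, C ((a j' : ℝ) : ℂ) * Xp vv (j' : ℕ)).coeff (n - 1 - j) = 0 := by
          rw [finset_sum_coeff]
          apply Finset.sum_eq_zero
          intro j' _
          rw [coeff_C_mul, hxc (j' : ℕ) (by omega), mul_zero]
        have hxmul : (X * Xp vv (n - 1)).coeff (n - 1 - j) = -vv j := by
          have e1 : n - 1 - j = (n - 2 - j) + 1 := by omega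
          have e2 : n - 1 = j + 1 + (n - 2 - j) := by omega
          rw [e1, coeff_X_mul, e2, (Xp_spec vv j hmin (n - 2 - j)).2]
        rw [hF, coeff_add, coeff_sub, hsum, hxmul, coeff_C, if_neg (by omega : ¬(n - 1 - j = 0))]
        ring
      have hFne : F.coeff (n - 1 - j) ≠ 0 := by rw [hFc]; exact hjne
      have hdeg : 0 < F.degree := by
        rw [← Polynomial.natDegree_pos_iff_degree_pos]
        have := Polynomial.le_natDegree_of_ne_zero hFne
        omega
      obtain ⟨z₀, hroot⟩ := Complex.exists_root hdeg
      have hroot' : F.eval z₀ = 0 := hroot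
      set w : Fin n ⊕ Fin 1 → ℂ :=
        Sum.elim (fun i : Fin n => (Xp vv (i : ℕ)).eval z₀) (fun _ : Fin 1 => 1) with hw
      have hw0 : w ≠ 0 := by
        intro hcon
        have := congrFun hcon (Sum.inr 0)
        simp [hw] at this
      have hker : Mfam n a v z₀ *ᵥ w = 0 := by
        funext r
        cases r with
        | inl i =>
          by_cases hi : (i : ℕ) + 1 < n
          · rw [Mrow_mid n a v z₀ w i hi]
            simp only [hw, Sum.elim_inl, Sum.elim_inr, Pi.zero_apply]
            have h1 : Xp vv ((i : ℕ) + 1) = X * Xp vv (i : ℕ) - C (vv (i : ℕ)) := rfl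
            rw [← hvval i]
            simp [h1]
          · have hi' : (i : ℕ) + 1 = n := by omega
            rw [Mrow_last n a v z₀ w i hi']
            simp only [hw, Sum.elim_inl, Sum.elim_inr, Pi.zero_apply, mul_one]
            have hival : (i : ℕ) = n - 1 := by omega
            have hvl : (v i : ℂ) = vv (n - 1) := by rw [← hival]; exact (hvval i).symm
            rw [hvl, hival, ← hroot', hF]
            simp [eval_finset_sum]
        | inr k =>
          rw [Mrow_out n hn a v z₀ w k]
          simp only [hw, Sum.elim_inl, Pi.zero_apply]
          simp [Xp]
      exact h z₀ (Matrix.exists_mulVec_eq_zero_iff.mp ⟨w, hw0, hker⟩)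
    · push_neg at hex
      refine ⟨fun i hi => hex i hi, ?_⟩
      intro hlast
      have hv : ∀ i : Fin n, v i = 0 := by
        intro i
        rcases lt_or_eq_of_le (by omega : (i : ℕ) ≤ n - 1) with hlt | heq
        · exact hex i hlt
        · have : i = ⟨n - 1, by omega⟩ := Fin.ext heq
          rw [this]; exact hlast
      have hdet : (Mfam n a v 0).det = 0 := by
        apply Matrix.det_eq_zero_of_column_eq_zero (Sum.inr 0)
        intro r
        cases r with
        | inl i => simp [Mfam, Matrix.fromBlocks, hv i]
        | inr k => simp [Mfam, Matrix.fromBlocks]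
      exact absurd hdet (h 0)
  · rintro ⟨hsmall, hlast⟩ z hdet
    obtain ⟨w, hw0, hker⟩ := Matrix.exists_mulVec_eq_zero_iff.2 hdet
    have hx0 : w (Sum.inl ⟨0, hn⟩) = 0 := by
      have h1 := congrFun hker (Sum.inr 0)
      rw [Mrow_out n hn a v z w 0] at h1
      simpa using h1
    have hxs : ∀ k : ℕ, ∀ hk : k < n, w (Sum.inl ⟨k, hk⟩) = 0 := by
      intro k
      induction k with
      | zero => intro hk; exact hx0
      | succ k ih =>
        intro hk
        have hk' : k < n := by omega
        have hmid := congrFun hker (Sum.inl ⟨k, hk'⟩)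
        rw [Mrow_mid n a v z w ⟨k, hk'⟩ (by simpa using hk)] at hmid
        have hvk : v ⟨k, hk'⟩ = 0 := hsmall ⟨k, hk'⟩ (show k < n - 1 by omega)
        simp only [ih hk', hvk, Complex.ofReal_zero, zero_mul, mul_zero, sub_zero, add_zero,
          Pi.zero_apply] at hmid
        exact hmid
    have hxall : ∀ i : Fin n, w (Sum.inl i) = 0 := by
      intro i
      have := hxs (i : ℕ) i.isLt
      simpa using this
    have hlastrow := congrFun hker (Sum.inl ⟨n - 1, by omega⟩)
    rw [Mrow_last n a v z w ⟨n - 1, by omega⟩ (show n - 1 + 1 = n by omega)] at hlastrow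
    simp only [hxall, mul_zero, sub_zero, zero_add, Finset.sum_const_zero,
      Pi.zero_apply] at hlastrow
    have hy : w (Sum.inr 0) = 0 := by
      rcases mul_eq_zero.mp hlastrow with h1 | h1
      · exact absurd (Complex.ofReal_eq_zero.mp h1) hlast
      · exact h1
    apply hw0
    funext r
    cases r with
    | inl i => exact hxall i
    | inr k =>
      have : k = 0 := Subsingleton.elim k 0
      rw [this]; exact hy
end

section
/- Let n ≥ 1, let A0 be a real n×n matrix, E0 a real n×1 column vector, C0 a real 1×n row vector. Assume (A0, C0) is observable and that for every z ∈ ℂ the complex matrix [[A0 − z·I_n, E0], [C0, 0]] has rank n+1. Define the augmented matrices A = [[A0, E0], [0_{1×n}, 1]] (a real (n+1)×(n+1) matrix) and C = [C0, 0] (a real 1×(n+1) row vector). Then the augmented pair (A, C) is observable, i.e., the (n+1)×(n+1) matrix whose rows are C, C·A, …, C·A^{n} is invertible. -/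
open Matrix

/-- The augmented system matrix `A = [[A0, E0], [0, 1]]` of size `(n+1) × (n+1)`. -/
noncomputable def augA (n : ℕ) (A0 : Matrix (Fin n) (Fin n) ℝ)
    (E0 : Matrix (Fin n) (Fin 1) ℝ) : Matrix (Fin (n + 1)) (Fin (n + 1)) ℝ :=
  Matrix.of fun i j =>
    if hi : (i : ℕ) < n then
      if hj : (j : ℕ) < n then A0 ⟨i, hi⟩ ⟨j, hj⟩ else E0 ⟨i, hi⟩ 0
    else
      if (j : ℕ) < n then 0 else 1

/-- The augmented output matrix `C = [C0, 0]` of size `1 × (n+1)`. -/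
noncomputable def augC (n : ℕ) (C0 : Matrix (Fin 1) (Fin n) ℝ) :
    Matrix (Fin 1) (Fin (n + 1)) ℝ :=
  Matrix.of fun i j => if hj : (j : ℕ) < n then C0 i ⟨j, hj⟩ else 0

section Aux

variable {n : ℕ} {A0 : Matrix (Fin n) (Fin n) ℝ} {E0 : Matrix (Fin n) (Fin 1) ℝ}
  {C0 : Matrix (Fin 1) (Fin n) ℝ}

lemma augA_apply_castSucc (i : Fin n) (j : Fin (n + 1)) :
    augA n A0 E0 i.castSucc j =
      if hj : (j : ℕ) < n then A0 i ⟨j, hj⟩ else E0 i 0 := by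
  simp [augA, i.isLt]

lemma augA_apply_last (j : Fin (n + 1)) :
    augA n A0 E0 (Fin.last n) j = if (j : ℕ) < n then 0 else 1 := by
  simp [augA]

lemma aug_row (k : ℕ) (j : Fin (n + 1)) :
    (augC n C0 * (augA n A0 E0) ^ k) 0 j =
      if hj : (j : ℕ) < n then (C0 * A0 ^ k) 0 ⟨j, hj⟩
      else (C0 * (∑ t ∈ Finset.range k, A0 ^ t) * E0) 0 0 := by
  induction k generalizing j with
  | zero =>
    by_cases hj : (j : ℕ) < n <;> simp [augC, hj]
  | succ k ih =>
    rw [pow_succ, ← Matrix.mul_assoc, Matrix.mul_apply, Fin.sum_univ_castSucc]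
    have hlast : (augC n C0 * augA n A0 E0 ^ k) 0 (Fin.last n) =
        (C0 * (∑ t ∈ Finset.range k, A0 ^ t) * E0) 0 0 := by
      rw [ih]; simp
    have hcast : ∀ l : Fin n, (augC n C0 * augA n A0 E0 ^ k) 0 l.castSucc =
        (C0 * A0 ^ k) 0 l := by
      intro l; rw [ih]; simp [l.isLt]
    by_cases hj : (j : ℕ) < n
    · have : ∀ l : Fin n,
          (augC n C0 * augA n A0 E0 ^ k) 0 l.castSucc * augA n A0 E0 l.castSucc j =
            (C0 * A0 ^ k) 0 l * A0 l ⟨j, hj⟩ := by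
        intro l; rw [hcast, augA_apply_castSucc]; simp [hj]
      rw [Finset.sum_congr rfl fun l _ => this l, hlast, augA_apply_last]
      simp only [hj, if_pos, mul_zero, add_zero, dif_pos]
      rw [pow_succ, ← Matrix.mul_assoc, Matrix.mul_apply]
    · have : ∀ l : Fin n,
          (augC n C0 * augA n A0 E0 ^ k) 0 l.castSucc * augA n A0 E0 l.castSucc j =
            (C0 * A0 ^ k) 0 l * E0 l 0 := by
        intro l; rw [hcast, augA_apply_castSucc]; simp [hj]
      rw [Finset.sum_congr rfl fun l _ => this l, hlast, augA_apply_last]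
      simp only [hj, if_neg, mul_one, dif_neg, not_false_iff]
      have : C0 * (∑ t ∈ Finset.range (k + 1), A0 ^ t) * E0 =
          C0 * A0 ^ k * E0 + C0 * (∑ t ∈ Finset.range k, A0 ^ t) * E0 := by
        rw [Finset.sum_range_succ, Matrix.mul_add, Matrix.add_mul, add_comm]
      rw [this, Matrix.add_apply]
      exact congrArg (· + _) (Matrix.mul_apply ..).symm

end Aux
theorem stmt2 (n : ℕ) (hn : 1 ≤ n)
    (A0 : Matrix (Fin n) (Fin n) ℝ) (E0 : Matrix (Fin n) (Fin 1) ℝ)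
    (C0 : Matrix (Fin 1) (Fin n) ℝ)
    (hobs : IsUnit (obsMat A0 C0).det)
    (hrank : ∀ z : ℂ, (rosenbrock n A0 E0 C0 z).rank = n + 1) :
    IsUnit (obsMat (augA n A0 E0) (augC n C0)).det := by
  by_contra hcon
  rw [isUnit_iff_ne_zero, not_not] at hcon
  obtain ⟨v, hv0, hv⟩ := Matrix.exists_mulVec_eq_zero_iff.mpr hcon
  set x : Fin n → ℝ := fun j => v j.castSucc with hx
  set a : ℝ := v (Fin.last n) with ha
  -- the kernel equations
  have hW : ∀ i : Fin (n + 1),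
      (∑ j : Fin n, (C0 * A0 ^ (i : ℕ)) 0 j * x j)
        + (C0 * (∑ t ∈ Finset.range (i : ℕ), A0 ^ t) * E0) 0 0 * a = 0 := by
    intro i
    have h := congrFun hv i
    simp only [Matrix.mulVec, dotProduct, Pi.zero_apply] at h
    rw [Fin.sum_univ_castSucc] at h
    have h1 : ∀ j : Fin n,
        obsMat (augA n A0 E0) (augC n C0) i j.castSucc * v j.castSucc
          = (C0 * A0 ^ (i : ℕ)) 0 j * x j := by
      intro j
      have hr := aug_row (A0 := A0) (E0 := E0) (C0 := C0) (i : ℕ) j.castSucc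
      simp only [obsMat, Matrix.of_apply]
      rw [hr]
      simp [hx, j.isLt]
    have h2 : obsMat (augA n A0 E0) (augC n C0) i (Fin.last n) * v (Fin.last n)
        = (C0 * (∑ t ∈ Finset.range (i : ℕ), A0 ^ t) * E0) 0 0 * a := by
      simp only [obsMat, Matrix.of_apply]
      rw [aug_row]
      simp [ha]
    rw [Finset.sum_congr rfl fun j _ => h1 j, h2] at h
    exact h
  -- the combined vector killed by the observability matrix of (A0, C0)
  set u : Fin n → ℝ := fun j => (∑ l, A0 j l * x l) - x j + E0 j 0 * a with hu_def
  have hmu : (obsMat A0 C0).mulVec u = 0 := by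
    funext k
    simp only [Matrix.mulVec, dotProduct, Pi.zero_apply, obsMat, Matrix.of_apply]
    have e1 := hW k.succ
    have e2 := hW k.castSucc
    simp only [Fin.val_succ, Fin.coe_castSucc] at e1 e2
    have t1 : ∑ l : Fin n, (C0 * A0 ^ ((k : ℕ) + 1)) 0 l * x l
        = ∑ j : Fin n, (C0 * A0 ^ (k : ℕ)) 0 j * (∑ l, A0 j l * x l) := by
      rw [pow_succ, ← Matrix.mul_assoc]
      calc ∑ l : Fin n, (C0 * A0 ^ (k : ℕ) * A0) 0 l * x l
          = ∑ l : Fin n, (∑ j, (C0 * A0 ^ (k : ℕ)) 0 j * A0 j l) * x l := by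
            simp [Matrix.mul_apply]
        _ = ∑ l : Fin n, ∑ j, (C0 * A0 ^ (k : ℕ)) 0 j * A0 j l * x l := by
            simp [Finset.sum_mul]
        _ = ∑ j : Fin n, ∑ l, (C0 * A0 ^ (k : ℕ)) 0 j * A0 j l * x l := Finset.sum_comm
        _ = ∑ j : Fin n, (C0 * A0 ^ (k : ℕ)) 0 j * ∑ l, A0 j l * x l := by
            simp [Finset.mul_sum, mul_assoc]
    have t3 : (C0 * A0 ^ (k : ℕ) * E0) 0 0 = ∑ j, (C0 * A0 ^ (k : ℕ)) 0 j * E0 j 0 :=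
      Matrix.mul_apply
    have expand : ∑ j : Fin n, (C0 * A0 ^ (k : ℕ)) 0 j * u j
        = (∑ l : Fin n, (C0 * A0 ^ ((k : ℕ) + 1)) 0 l * x l)
          - (∑ j : Fin n, (C0 * A0 ^ (k : ℕ)) 0 j * x j)
          + (C0 * A0 ^ (k : ℕ) * E0) 0 0 * a := by
      rw [t1, t3, Finset.sum_mul, ← Finset.sum_sub_distrib, ← Finset.sum_add_distrib]
      refine Finset.sum_congr rfl fun j _ => ?_
      simp only [hu_def]
      ring
    have hsplit : (C0 * (∑ t ∈ Finset.range ((k : ℕ) + 1), A0 ^ t) * E0) 0 0 * a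
        = (C0 * A0 ^ (k : ℕ) * E0) 0 0 * a
          + (C0 * (∑ t ∈ Finset.range (k : ℕ), A0 ^ t) * E0) 0 0 * a := by
      have : C0 * (∑ t ∈ Finset.range ((k : ℕ) + 1), A0 ^ t) * E0
          = C0 * A0 ^ (k : ℕ) * E0 + C0 * (∑ t ∈ Finset.range (k : ℕ), A0 ^ t) * E0 := by
        rw [Finset.sum_range_succ, Matrix.mul_add, Matrix.add_mul, add_comm]
      rw [this, Matrix.add_apply]
      ring
    rw [expand]
    linarith [e1, e2, hsplit]
  have hu0 : u = 0 := by
    by_contra hne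
    exact isUnit_iff_ne_zero.mp hobs (Matrix.exists_mulVec_eq_zero_iff.mp ⟨u, hne, hmu⟩)
  have hC0x : ∑ j : Fin n, C0 0 j * x j = 0 := by
    have h := hW 0
    simpa using h
  -- use the rank condition at z = 1
  have hR := hrank 1
  have hfin : Module.finrank ℂ (Fin n ⊕ Fin 1 → ℂ) = n + 1 := by
    rw [Module.finrank_pi]
    simp
  have hrange : LinearMap.range (rosenbrock n A0 E0 C0 1).mulVecLin = ⊤ := by
    apply Submodule.eq_top_of_finrank_eq
    rw [hfin]
    exact hR
  have hinj : Function.Injective (rosenbrock n A0 E0 C0 1).mulVecLin :=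
    (LinearMap.injective_iff_surjective).mpr (LinearMap.range_eq_top.mp hrange)
  set ξ : Fin n ⊕ Fin 1 → ℂ := Sum.elim (fun j => (x j : ℂ)) (fun _ => (a : ℂ)) with hξ
  have hmulξ : (rosenbrock n A0 E0 C0 1).mulVec ξ = 0 := by
    funext s
    cases s with
    | inl j =>
      have huj : (∑ l, A0 j l * x l) - x j + E0 j 0 * a = 0 := congrFun hu0 j
      simp only [rosenbrock, Matrix.mulVec, dotProduct, Fintype.sum_sum_type,
        Matrix.fromBlocks_apply₁₁, Matrix.fromBlocks_apply₁₂, Sum.elim_inl, Sum.elim_inr,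
        Matrix.sub_apply, Matrix.map_apply, one_smul, Matrix.one_apply, Pi.zero_apply,
        Fin.sum_univ_one, hξ]
      have key : ∑ l : Fin n, ((A0 j l : ℂ) - if j = l then 1 else 0) * (x l : ℂ)
          = (∑ l, (A0 j l : ℂ) * (x l : ℂ)) - (x j : ℂ) := by
        have hterm : ∀ l : Fin n, ((A0 j l : ℂ) - if j = l then 1 else 0) * (x l : ℂ)
            = (A0 j l : ℂ) * (x l : ℂ) - (if j = l then ((x l : ℂ)) else 0) := by
          intro l; by_cases h : j = l <;> simp [h] <;> ring
        rw [Finset.sum_congr rfl fun l _ => hterm l, Finset.sum_sub_distrib,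
          Finset.sum_ite_eq]
        simp
      rw [key]
      exact_mod_cast huj
    | inr t =>
      have ht : t = 0 := Subsingleton.elim t 0
      simp only [rosenbrock, Matrix.mulVec, dotProduct, Fintype.sum_sum_type,
        Matrix.fromBlocks_apply₂₁, Matrix.fromBlocks_apply₂₂, Sum.elim_inl, Sum.elim_inr,
        Matrix.map_apply, Matrix.zero_apply, Pi.zero_apply, Fin.sum_univ_one, zero_mul,
        add_zero, hξ, ht]
      have : ∑ l : Fin n, (C0 0 l : ℂ) * (x l : ℂ) = ((∑ l, C0 0 l * x l : ℝ) : ℂ) := by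
        push_cast
        rfl
      rw [this, hC0x]
      simp
  have hξ0 : ξ = 0 := by
    apply hinj
    simpa [Matrix.mulVecLin_apply] using hmulξ
  have hx0 : ∀ j, x j = 0 := fun j => by
    have := congrFun hξ0 (Sum.inl j)
    simpa [hξ] using this
  have ha0 : a = 0 := by
    have := congrFun hξ0 (Sum.inr 0)
    simpa [hξ] using this
  apply hv0
  funext i
  refine Fin.lastCases ?_ ?_ i
  · exact ha0
  · exact fun j => hx0 j
end

section
/- Let n ≥ 1, let A0 ∈ ℝ^{n×n}, B0, E0 ∈ ℝ^{n×1}, C0 ∈ ℝ^{1×n}. Assume (A0, C0) is observable and that for every z ∈ ℂ the matrix [[A0 − z·I_n, E0], [C0, 0]] has rank n+1. Let A = [[A0, E0], [0_{1×n}, 1]], B = (B0; 0), C = [C0, 0], E = (0, …, 0, 1)ᵀ ∈ ℝ^{n+1}, and let L ∈ ℝ^{n+1} be an observer gain such that the characteristic polynomial of A − L·C equals X^{n+1} (all observer eigenvalues at the origin). Let f : ℕ → ℝ, u : ℕ → ℝ, x : ℕ → ℝ^n satisfy x(k+1) = A0 x(k) + B0 u(k) + E0 f(k) for all k, set y(k)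 = C0 x(k), and let X̂ : ℕ → ℝ^{n+1} satisfy X̂(k+1) = A X̂(k) + B u(k) + L (y(k) − C X̂(k)) for all k, with arbitrary initial condition X̂(0). Then for every k ≥ n+2, the last component f̂(k) of X̂(k) satisfies f̂(k) = f(k−n−1). -/
open Matrix

/-- The augmented input matrix `B = (B0; 0)` of size `(n+1) × 1`. -/
noncomputable def augB (n : ℕ) (B0 : Matrix (Fin n) (Fin 1) ℝ) :
    Matrix (Fin (n + 1)) (Fin 1) ℝ :=
  Matrix.of fun i j => if hi : (i : ℕ) < n then B0 ⟨i, hi⟩ j else 0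

/-!
The error `e = (x, f) - X̂` obeys `e (k+1) = M e k + (f (k+1) - f k) E` with `M = A - L C`
nilpotent, so `e (k+n+1) = ∑ j ≤ n, (f (k+j+1) - f (k+j)) M ^ (n-j) E`. Its last entry
telescopes to `f (k+n+1) - f k` as soon as `(M ^ j) last last = 1` for all `j ≤ n`.

For that, write `M = [[F, E0], [-ℓ C0, 1]]`. Since `M` is nilpotent, `adj (tI - M)` is
`∑ j, t ^ (n-j) M ^ j`, and its last diagonal entry is `det (tI - F)`. Expanding `det (tI - M)`
along its last row gives `t ^ (n+1) = (t - 1) det (tI - F) + ℓ ρ(t)` with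
`ρ(t) = det [[tI - F, -E0], [C0, 0]]`. Output injection does not change `ρ`, and the rank
condition says that `ρ` has no complex root, so `ρ` is constant. Hence
`det (tI - F) = 1 + t + ⋯ + t ^ n`, and comparing coefficients gives `(M ^ j) last last = 1`.
-/

open Polynomial Finset

namespace Polynomial

theorem eq_geom_sum_of_mul_X_sub_one_add_C_eq_X_pow {R : Type*} [CommRing R] {q : R[X]} {c : R}
    {m : ℕ} (h : q * (X - 1) + C c = X ^ m) : q = ∑ i ∈ range m, X ^ i := by
  have hc : c = 1 := by simpa using congrArg (eval 1) h
  subst hc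
  refine (monic_X_sub_C (1 : R)).isRegular.right ?_
  simp only [C_1] at h ⊢
  rw [geom_sum_mul, ← h, add_sub_cancel_right]

theorem coeff_sum_range_X_pow_mul_C {R : Type*} [CommRing R] (b : ℕ → R) {m j : ℕ}
    (hj : j < m) :
    (∑ i ∈ range m, X ^ i * C (b i)).coeff j = b j := by
  simp only [finsetSum_coeff, X_pow_mul, coeff_C_mul_X_pow]
  rw [sum_ite_eq (range m) j, if_pos (mem_range.mpr hj)]

end Polynomial

namespace Matrix

variable {R : Type*} [CommRing R] {ι : Type*} [Fintype ι] [DecidableEq ι]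

theorem pow_eq_zero_of_charpoly_eq_X_pow {M : Matrix ι ι R} {m : ℕ} (h : M.charpoly = X ^ m) :
    M ^ m = 0 := by
  simpa [h] using M.aeval_self_charpoly

theorem adjugate_charmatrix_of_charpoly_eq_X_pow {M : Matrix ι ι R} {m : ℕ}
    (h : M.charpoly = X ^ m) :
    adjugate (charmatrix M) = ∑ i ∈ range m, (X ^ i : R[X]) • (M ^ (m - 1 - i)).map C := by
  set Mc := (C : R →+* R[X]).mapMatrix M
  have hgeom := (scalar_commute (X : R[X]) (Commute.all _) Mc).mul_geom_sum₂ m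
  have hMc : Mc ^ m = 0 := by
    rw [← map_pow, pow_eq_zero_of_charpoly_eq_X_pow h, map_zero]
  have hsum : ∑ i ∈ range m, scalar ι (X : R[X]) ^ i * Mc ^ (m - 1 - i) =
      ∑ i ∈ range m, (X ^ i : R[X]) • (M ^ (m - 1 - i)).map C := by
    refine sum_congr rfl fun i _ => ?_
    rw [← map_pow, ← map_pow, scalar_apply, ← smul_eq_diagonal_mul, RingHom.mapMatrix_apply]
  rw [hMc, sub_zero, ← charmatrix, hsum, ← map_pow] at hgeom
  refine (isRegular_of_isLeftRegular_det (A := charmatrix M) ?_).left ?_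
  · rw [← charpoly, h]
    exact (isRegular_X_pow m).left
  · dsimp only
    rw [mul_adjugate, hgeom, ← charpoly, h, scalar_apply, smul_eq_diagonal_mul, mul_one]

theorem adjugate_fromBlocks_inr_inr (P : Matrix ι ι R) (Q : Matrix ι (Fin 1) R)
    (S : Matrix (Fin 1) ι R) (T : Matrix (Fin 1) (Fin 1) R) :
    adjugate (fromBlocks P Q S T) (Sum.inr 0) (Sum.inr 0) = P.det := by
  have hrow : (fromBlocks P Q S T).updateRow (Sum.inr 0) (Pi.single (Sum.inr 0) 1) =
      fromBlocks P Q 0 1 := by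
    ext (i | i) (j | j) <;> simp [updateRow_apply, Fin.fin_one_eq_zero]
  rw [adjugate_apply, hrow, det_fromBlocks_zero₂₁, det_one, mul_one]

theorem det_fromBlocks_add_smul (P : Matrix ι ι R) (Q : Matrix ι (Fin 1) R)
    (S S' : Matrix (Fin 1) ι R) (T T' : Matrix (Fin 1) (Fin 1) R) (a : R) :
    (fromBlocks P Q (S + a • S') (T + a • T')).det =
      (fromBlocks P Q S T).det + a * (fromBlocks P Q S' T').det := by
  set N := fromBlocks P Q S T
  have hsum : fromBlocks P Q (S + a • S') (T + a • T') =
      N.updateRow (Sum.inr 0) (N (Sum.inr 0) + a • fromBlocks P Q S' T' (Sum.inr 0)) := by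
    ext (i | i) (j | j) <;> simp [N, updateRow_apply, Fin.fin_one_eq_zero]
  have hrow :
      N.updateRow (Sum.inr 0) (fromBlocks P Q S' T' (Sum.inr 0)) = fromBlocks P Q S' T' := by
    ext (i | i) (j | j) <;> simp [N, updateRow_apply, Fin.fin_one_eq_zero]
  rw [hsum, det_updateRow_add, det_updateRow_smul, updateRow_eq_self, hrow]

theorem det_ne_zero_of_rank_eq_card {K : Type*} [Field K] {A : Matrix ι ι K}
    (h : A.rank = Fintype.card ι) : A.det ≠ 0 := by
  refine (isUnit_iff_isUnit_det A).mp (mulVec_surjective_iff_isUnit.mp ?_) |>.ne_zero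
  rw [← coe_mulVecLin, ← LinearMap.range_eq_top]
  apply Submodule.eq_top_of_finrank_eq
  rw [← rank, h, Module.finrank_fintype_fun_eq_card]

theorem eq_pow_mul_add_sum_of_succ_eq {P : Type*} (M : Matrix ι ι R) (w : Matrix ι P R)
    (e : ℕ → Matrix ι P R) (d : ℕ → R) (h : ∀ k, e (k + 1) = M * e k + d k • w)
    (k m : ℕ) :
    e (k + m) = M ^ m * e k + ∑ j ∈ range m, d (k + j) • (M ^ (m - 1 - j) * w) := by
  induction m with
  | zero => simp
  | succ m ih =>
    rw [← add_assoc, h, ih, Matrix.mul_add, ← Matrix.mul_assoc, ← pow_succ', Matrix.mul_sum,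
      sum_range_succ _ m, Nat.add_sub_cancel, Nat.sub_self, pow_zero, Matrix.one_mul, add_assoc]
    congr 2
    refine sum_congr rfl fun j hj => ?_
    rw [Matrix.mul_smul, ← Matrix.mul_assoc, ← pow_succ']
    congr 3
    have := mem_range.mp hj
    omega

theorem apply_add_of_succ_eq_add_single (M : Matrix ι ι R) (r : ι) {m : ℕ} (hnil : M ^ m = 0)
    (hdiag : ∀ j < m, (M ^ j) r r = 1) (e : ℕ → Matrix ι (Fin 1) R) (d : ℕ → R)
    (h : ∀ k, e (k + 1) = M * e k + d k • single r 0 1) (k : ℕ) :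
    e (k + m) r 0 = ∑ j ∈ range m, d (k + j) := by
  rw [eq_pow_mul_add_sum_of_succ_eq M _ e d h k m, hnil, Matrix.zero_mul, zero_add,
    Matrix.sum_apply]
  refine sum_congr rfl fun j hj => ?_
  rw [smul_apply, mul_single_apply_same, mul_one, hdiag _ (by have := mem_range.mp hj; omega),
    smul_eq_mul, mul_one]

end Matrix

section RosenbrockPoly

variable {R : Type*} [CommRing R] {ι : Type*} [Fintype ι] [DecidableEq ι]

/-- `det [[tI - A, -e], [c, 0]]`; at `t = z` it is `(-1) ^ card ι` times the determinant of the
Rosenbrock matrix `[[A - zI, e], [c, 0]]`, so its roots are the invariant zeros of `(A, e, c)`. -/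
noncomputable def rosenbrockPoly (A : Matrix ι ι R) (e : Matrix ι (Fin 1) R)
    (c : Matrix (Fin 1) ι R) : R[X] :=
  (fromBlocks (charmatrix A) (-e.map C) (c.map C) 0).det

theorem charpoly_fromBlocks_neg_smul_one (A : Matrix ι ι R) (e : Matrix ι (Fin 1) R)
    (c : Matrix (Fin 1) ι R) (ℓ : R) :
    (fromBlocks A e (-(ℓ • c)) 1).charpoly =
      A.charpoly * (X - 1) + C ℓ * rosenbrockPoly A e c := by
  have hblocks : (-(-(ℓ • c)).map C : Matrix (Fin 1) ι R[X]) = 0 + C ℓ • c.map C ∧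
      charmatrix (1 : Matrix (Fin 1) (Fin 1) R) = charmatrix 1 + C ℓ • 0 := by
    constructor
    · ext i j; simp [mul_comm]
    · simp
  rw [charpoly, charmatrix_fromBlocks, hblocks.1, hblocks.2, det_fromBlocks_add_smul,
    det_fromBlocks_zero₂₁, ← charpoly, ← charpoly, charpoly_one, Fintype.card_fin, pow_one,
    rosenbrockPoly]

theorem rosenbrockPoly_sub_mul (A : Matrix ι ι R) (e l : Matrix ι (Fin 1) R)
    (c : Matrix (Fin 1) ι R) : rosenbrockPoly (A - l * c) e c = rosenbrockPoly A e c := by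
  have hfac : fromBlocks (charmatrix (A - l * c)) (-e.map C) (c.map C) 0 =
      fromBlocks 1 (l.map C) 0 1 * fromBlocks (charmatrix A) (-e.map C) (c.map C) 0 := by
    have hch : charmatrix (A - l * c) = charmatrix A + l.map C * c.map C := by
      rw [charmatrix, charmatrix, map_sub, RingHom.mapMatrix_apply, RingHom.mapMatrix_apply,
        Matrix.map_mul]
      abel
    simp [fromBlocks_multiply, hch]
  rw [rosenbrockPoly, hfac, det_mul, det_fromBlocks_zero₂₁, det_one, det_one, one_mul, one_mul,
    rosenbrockPoly]

theorem pow_fromBlocks_neg_smul_one_inr_inr (F : Matrix ι ι R) (e : Matrix ι (Fin 1) R)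
    (c : Matrix (Fin 1) ι R) (ℓ r : R)
    (hM : (fromBlocks F e (-(ℓ • c)) 1).charpoly = X ^ (Fintype.card ι + 1))
    (hρ : rosenbrockPoly F e c = C r) {j : ℕ} (hj : j ≤ Fintype.card ι) :
    ((fromBlocks F e (-(ℓ • c)) 1) ^ j) (Sum.inr 0) (Sum.inr 0) = 1 := by
  set M := fromBlocks F e (-(ℓ • c)) 1
  set m := Fintype.card ι
  have hgeom : F.charpoly = ∑ i ∈ range (m + 1), X ^ i := by
    refine eq_geom_sum_of_mul_X_sub_one_add_C_eq_X_pow (c := ℓ * r) ?_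
    rw [C_mul, ← hρ, ← charpoly_fromBlocks_neg_smul_one, hM]
  have hadj :
      F.charpoly = ∑ i ∈ range (m + 1), X ^ i * C ((M ^ (m - i)) (Sum.inr 0) (Sum.inr 0)) := by
    rw [charpoly, ← adjugate_fromBlocks_inr_inr (charmatrix F) (-e.map C) (-(-(ℓ • c)).map C)
      (charmatrix 1), ← charmatrix_fromBlocks, adjugate_charmatrix_of_charpoly_eq_X_pow hM,
      Matrix.sum_apply]
    simp
  have hlt : m - j < m + 1 := Nat.lt_succ_of_le (Nat.sub_le m j)
  have hone : (∑ i ∈ range (m + 1), (X : R[X]) ^ i).coeff (m - j) = 1 := by simp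
  have hcoeff := coeff_sum_range_X_pow_mul_C (fun i => (M ^ (m - i)) (Sum.inr 0) (Sum.inr 0)) hlt
  rw [← hadj, hgeom, hone, Nat.sub_sub_self hj] at hcoeff
  exact hcoeff.symm

end RosenbrockPoly

theorem eval_map_rosenbrockPoly (n : ℕ) (A0 : Matrix (Fin n) (Fin n) ℝ)
    (E0 : Matrix (Fin n) (Fin 1) ℝ) (C0 : Matrix (Fin 1) (Fin n) ℝ) (z : ℂ) :
    ((rosenbrockPoly A0 E0 C0).map Complex.ofRealHom).eval z =
      (-1) ^ n * (rosenbrock n A0 E0 C0 z).det := by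
  have hfac : (fromBlocks (charmatrix A0) (-E0.map C) (C0.map C) 0).map
        (eval₂RingHom Complex.ofRealHom z) =
      fromBlocks (-1) 0 0 1 * rosenbrock n A0 E0 C0 z := by
    ext (i | i) (j | j) <;>
      simp [rosenbrock, fromBlocks_multiply, charmatrix_apply, diagonal_apply, one_apply,
        apply_ite]
  rw [eval_map, rosenbrockPoly, ← coe_eval₂RingHom, RingHom.map_det, RingHom.mapMatrix_apply,
    hfac, det_mul, det_fromBlocks_zero₂₁, det_one, mul_one, det_neg, det_one, Fintype.card_fin,
    mul_one]

theorem rosenbrockPoly_eq_C_of_rank (n : ℕ) (A0 : Matrix (Fin n) (Fin n) ℝ)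
    (E0 : Matrix (Fin n) (Fin 1) ℝ) (C0 : Matrix (Fin 1) (Fin n) ℝ)
    (hrank : ∀ z : ℂ, (rosenbrock n A0 E0 C0 z).rank = n + 1) :
    rosenbrockPoly A0 E0 C0 = C ((rosenbrockPoly A0 E0 C0).coeff 0) := by
  refine eq_C_of_degree_le_zero ?_
  rw [← degree_map_eq_of_injective Complex.ofRealHom.injective]
  by_contra! hpos
  obtain ⟨z, hz⟩ := Complex.exists_root hpos
  rw [IsRoot, eval_map_rosenbrockPoly] at hz
  refine mul_ne_zero (pow_ne_zero _ (neg_ne_zero.mpr one_ne_zero))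
    (det_ne_zero_of_rank_eq_card ?_) hz
  simp [hrank z]

theorem augA_sub_mul_augC_submatrix (n : ℕ) (A0 : Matrix (Fin n) (Fin n) ℝ)
    (E0 : Matrix (Fin n) (Fin 1) ℝ) (C0 : Matrix (Fin 1) (Fin n) ℝ)
    (L : Matrix (Fin (n + 1)) (Fin 1) ℝ) :
    (augA n A0 E0 - L * augC n C0).submatrix finSumFinEquiv finSumFinEquiv =
      fromBlocks (A0 - L.submatrix (Fin.castAdd 1) id * C0) E0
        (-(L (Fin.last n) 0 • C0)) 1 := by
  have hlast : Fin.natAdd n (0 : Fin 1) = Fin.last n := rfl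
  ext (i | i) (j | j) <;> simp [augA, augC, mul_apply, Fin.fin_one_eq_zero, hlast]

theorem pow_augA_sub_mul_augC_last_last (n : ℕ) (A0 : Matrix (Fin n) (Fin n) ℝ)
    (E0 : Matrix (Fin n) (Fin 1) ℝ) (C0 : Matrix (Fin 1) (Fin n) ℝ)
    (hrank : ∀ z : ℂ, (rosenbrock n A0 E0 C0 z).rank = n + 1)
    (L : Matrix (Fin (n + 1)) (Fin 1) ℝ)
    (hL : (augA n A0 E0 - L * augC n C0).charpoly = X ^ (n + 1)) {j : ℕ} (hj : j ≤ n) :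
    ((augA n A0 E0 - L * augC n C0) ^ j) (Fin.last n) (Fin.last n) = 1 := by
  set Mf := augA n A0 E0 - L * augC n C0
  have hsub := augA_sub_mul_augC_submatrix n A0 E0 C0 L
  have hreindex : ∀ N : Matrix (Fin (n + 1)) (Fin (n + 1)) ℝ,
      N.submatrix finSumFinEquiv finSumFinEquiv = reindexAlgEquiv ℝ ℝ finSumFinEquiv.symm N :=
    fun _ => rfl
  have hchar : (Mf.submatrix finSumFinEquiv finSumFinEquiv).charpoly =
      X ^ (Fintype.card (Fin n) + 1) := by
    rw [hreindex, coe_reindexAlgEquiv, charpoly_reindex, hL, Fintype.card_fin]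
  have hρ : rosenbrockPoly (A0 - L.submatrix (Fin.castAdd 1) id * C0) E0 C0 =
      C ((rosenbrockPoly A0 E0 C0).coeff 0) := by
    rw [rosenbrockPoly_sub_mul, ← rosenbrockPoly_eq_C_of_rank n A0 E0 C0 hrank]
  rw [hsub] at hchar
  have h := pow_fromBlocks_neg_smul_one_inr_inr _ _ _ _ _ hchar hρ (j := j)
    (by rwa [Fintype.card_fin])
  rw [← hsub, hreindex, ← map_pow, ← hreindex] at h
  exact h

noncomputable def augState (n : ℕ) (x : Matrix (Fin n) (Fin 1) ℝ) (f : ℝ) :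
    Matrix (Fin (n + 1)) (Fin 1) ℝ :=
  Matrix.of fun i _ => if hi : (i : ℕ) < n then x ⟨i, hi⟩ 0 else f

theorem augC_mul_augState (n : ℕ) (C0 : Matrix (Fin 1) (Fin n) ℝ)
    (x : Matrix (Fin n) (Fin 1) ℝ) (f : ℝ) : augC n C0 * augState n x f = C0 * x := by
  ext i j
  simp [augC, augState, mul_apply, Fin.sum_univ_castSucc, Fin.fin_one_eq_zero]

theorem augState_eq_augA_mul_add (n : ℕ) (A0 : Matrix (Fin n) (Fin n) ℝ)
    (B0 E0 : Matrix (Fin n) (Fin 1) ℝ) (x : Matrix (Fin n) (Fin 1) ℝ) (u f f' : ℝ) :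
    augState n (A0 * x + u • B0 + f • E0) f' =
      augA n A0 E0 * augState n x f + u • augB n B0 + (f' - f) • single (Fin.last n) 0 1 := by
  ext i j
  rw [Fin.fin_one_eq_zero j]
  induction i using Fin.lastCases with
  | last => simp [augA, augB, augState, mul_apply, Fin.sum_univ_castSucc]
  | cast i =>
    simp [augA, augB, augState, mul_apply, Fin.sum_univ_castSucc,
      single_apply_of_row_ne (Fin.castSucc_ne_last i).symm]
    ring

theorem augState_sub_observer_step (n : ℕ) (A0 : Matrix (Fin n) (Fin n) ℝ)
    (B0 E0 : Matrix (Fin n) (Fin 1) ℝ) (C0 : Matrix (Fin 1) (Fin n) ℝ)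
    (L : Matrix (Fin (n + 1)) (Fin 1) ℝ) (x : Matrix (Fin n) (Fin 1) ℝ) (u f f' : ℝ)
    (Xh : Matrix (Fin (n + 1)) (Fin 1) ℝ) :
    augState n (A0 * x + u • B0 + f • E0) f' -
        (augA n A0 E0 * Xh + u • augB n B0 + ((C0 * x) 0 0 - (augC n C0 * Xh) 0 0) • L) =
      (augA n A0 E0 - L * augC n C0) * (augState n x f - Xh) +
        (f' - f) • single (Fin.last n) 0 1 := by
  have hcorr : L * (augC n C0 * (augState n x f - Xh)) =
      ((C0 * x) 0 0 - (augC n C0 * Xh) 0 0) • L := by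
    rw [Matrix.mul_sub, augC_mul_augState]
    ext i j
    simp [mul_apply, Fin.fin_one_eq_zero j, mul_comm]
  rw [augState_eq_augA_mul_add, Matrix.sub_mul, Matrix.mul_assoc, hcorr, Matrix.mul_sub]
  abel

theorem stmt4_general (n : ℕ)
    (A0 : Matrix (Fin n) (Fin n) ℝ) (B0 E0 : Matrix (Fin n) (Fin 1) ℝ)
    (C0 : Matrix (Fin 1) (Fin n) ℝ)
    (hrank : ∀ z : ℂ, (rosenbrock n A0 E0 C0 z).rank = n + 1)
    (L : Matrix (Fin (n + 1)) (Fin 1) ℝ)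
    (hL : (augA n A0 E0 - L * augC n C0).charpoly = Polynomial.X ^ (n + 1))
    (f u : ℕ → ℝ) (x : ℕ → Matrix (Fin n) (Fin 1) ℝ)
    (hx : ∀ k, x (k + 1) = A0 * x k + u k • B0 + f k • E0)
    (y : ℕ → ℝ) (hy : ∀ k, y k = (C0 * x k) 0 0)
    (Xh : ℕ → Matrix (Fin (n + 1)) (Fin 1) ℝ)
    (hXh : ∀ k, Xh (k + 1) = augA n A0 E0 * Xh k + u k • augB n B0
      + (y k - (augC n C0 * Xh k) 0 0) • L) :
    ∀ k, n + 2 ≤ k → Xh k (Fin.last n) 0 = f (k - (n + 1)) := by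
  intro k hk
  obtain ⟨k, rfl⟩ : ∃ k', k = k' + (n + 1) := ⟨k - (n + 1), by omega⟩
  set err := fun k => augState n (x k) (f k) - Xh k
  have herr : ∀ k, err (k + 1) = (augA n A0 E0 - L * augC n C0) * err k +
      (f (k + 1) - f k) • single (Fin.last n) 0 1 := fun k => by
    simp only [err]
    rw [hx, hXh, hy]
    exact augState_sub_observer_step n A0 B0 E0 C0 L (x k) (u k) (f k) (f (k + 1)) (Xh k)
  have hlast := apply_add_of_succ_eq_add_single _ (Fin.last n)
    (pow_eq_zero_of_charpoly_eq_X_pow hL)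
    (fun j hj => pow_augA_sub_mul_augC_last_last n A0 E0 C0 hrank L hL (by omega)) err _ herr k
  have htel : ∑ j ∈ range (n + 1), (f (k + j + 1) - f (k + j)) = f (k + (n + 1)) - f k :=
    sum_range_sub (fun j => f (k + j)) (n + 1)
  rw [htel] at hlast
  simpa [err, augState] using hlast

theorem stmt4 (n : ℕ) (hn : 1 ≤ n)
    (A0 : Matrix (Fin n) (Fin n) ℝ) (B0 E0 : Matrix (Fin n) (Fin 1) ℝ)
    (C0 : Matrix (Fin 1) (Fin n) ℝ)
    (hobs : IsUnit (obsMat A0 C0).det)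
    (hrank : ∀ z : ℂ, (rosenbrock n A0 E0 C0 z).rank = n + 1)
    (L : Matrix (Fin (n + 1)) (Fin 1) ℝ)
    (hL : (augA n A0 E0 - L * augC n C0).charpoly = Polynomial.X ^ (n + 1))
    (f u : ℕ → ℝ) (x : ℕ → Matrix (Fin n) (Fin 1) ℝ)
    (hx : ∀ k, x (k + 1) = A0 * x k + u k • B0 + f k • E0)
    (y : ℕ → ℝ) (hy : ∀ k, y k = (C0 * x k) 0 0)
    (Xh : ℕ → Matrix (Fin (n + 1)) (Fin 1) ℝ)
    (hXh : ∀ k, Xh (k + 1) = augA n A0 E0 * Xh k + u k • augB n B0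
      + (y k - (augC n C0 * Xh k) 0 0) • L) :
    ∀ k, n + 2 ≤ k → Xh k (Fin.last n) 0 = f (k - (n + 1)) :=
  stmt4_general n A0 B0 E0 C0 hrank L hL f u x hx y hy Xh hXh
end

section
/- Let n ≥ 1, let A0 ∈ ℝ^{n×n}, E0 ∈ ℝ^{n×1}, C0 ∈ ℝ^{1×n}. Assume (A0, C0) is observable and that for every z ∈ ℂ the matrix [[A0 − z·I_n, E0], [C0, 0]] has rank n+1. Let A = [[A0, E0], [0_{1×n}, 1]], C = [C0, 0], E = (0, …, 0, 1)ᵀ ∈ ℝ^{n+1}, and let L ∈ ℝ^{n+1} satisfy charpoly(A − L·C) = X^{n+1}. Then for every j with 0 ≤ j ≤ n, the last component of the vector (A − L·C)^{j} · E equals 1. -/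
open Matrix

/-- The extended-state direction `E = (0, …, 0, 1)ᵀ ∈ ℝ^{n+1}`, as a column matrix. -/
noncomputable def augE (n : ℕ) : Matrix (Fin (n + 1)) (Fin 1) ℝ :=
  Matrix.of fun i _ => if (i : ℕ) = n then 1 else 0


section Aux
open Polynomial

lemma adj_entry_coeff_zero (n : ℕ) (A : Matrix (Fin n) (Fin n) ℂ) (i j : Fin n) (k : ℕ)
    (hk : n ≤ k) (hn : 1 ≤ n) :
    (((A.map C - (X:ℂ[X]) • 1).adjugate i j)).coeff k = 0 := by
  set M := A.map C - (X:ℂ[X]) • 1 with hMdef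
  apply Polynomial.coeff_eq_zero_of_natDegree_lt
  have hdeg : ((M.adjugate) i j).natDegree ≤ n - 1 := by
    rw [Matrix.adjugate_apply, Matrix.det_apply]
    apply Polynomial.natDegree_sum_le_of_forall_le
    intro σ _
    have h1 : (∏ b, (M.updateRow j (Pi.single i 1)) (σ b) b).natDegree ≤ n - 1 := by
      refine le_trans (Polynomial.natDegree_prod_le _ _) ?_
      have hb : ∀ b : Fin n, ((M.updateRow j (Pi.single i 1)) (σ b) b).natDegree
          ≤ if σ b = j then 0 else 1 := by
        intro b
        by_cases h : σ b = j
        · simp only [h, if_pos rfl, Matrix.updateRow_apply, if_pos rfl]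
          rcases eq_or_ne b i with h2 | h2 <;> simp [Pi.single_apply, h2]
        · simp only [Matrix.updateRow_apply, h, if_neg h]
          by_cases h2 : σ b = b <;>
            simp [hMdef, Matrix.sub_apply, Matrix.smul_apply, Matrix.one_apply, h2] <;>
            compute_degree
      refine le_trans (Finset.sum_le_sum fun b _ => hb b) ?_
      have hrw : ∀ b : Fin n, (if σ b = j then (0:ℕ) else 1) = if b = σ⁻¹ j then 0 else 1 := by
        intro b
        have : σ b = j ↔ b = σ⁻¹ j := by
          constructor
          · intro h; simp [← h]
          · intro h; simp [h]
        simp only [this]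
      simp only [hrw]
      rw [← Finset.sum_erase_add _ _ (Finset.mem_univ (σ⁻¹ j)), if_pos rfl, add_zero]
      rw [Finset.sum_congr rfl (fun x hx => if_neg (Finset.ne_of_mem_erase hx))]
      simp
    rcases Int.units_eq_one_or σ.sign with h | h <;> rw [h]
    · simpa using h1
    · simpa using h1
  omega

lemma rec_coeff (n : ℕ) (A : Matrix (Fin n) (Fin n) ℂ) (k : ℕ) :
    A * (Matrix.of fun i j => (((A.map C - (X:ℂ[X]) • 1).adjugate) i j).coeff (k+1))
      - (Matrix.of fun i j => (((A.map C - (X:ℂ[X]) • 1).adjugate) i j).coeff k)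
      = (((A.map C - (X:ℂ[X]) • 1).det).coeff (k+1)) • 1 := by
  set M := A.map C - (X:ℂ[X]) • 1 with hMdef
  have h2 : A.map C * M.adjugate - (X:ℂ[X]) • M.adjugate = M.det • 1 := by
    have h := Matrix.mul_adjugate M
    rw [hMdef] at h
    rw [Matrix.sub_mul, Matrix.smul_mul, Matrix.one_mul] at h
    rw [← hMdef] at h
    exact h
  ext a c
  have h3 : ((A.map C * M.adjugate) a c).coeff (k+1) - (((X:ℂ[X]) • M.adjugate) a c).coeff (k+1)
      = ((M.det • (1 : Matrix (Fin n) (Fin n) ℂ[X])) a c).coeff (k+1) := by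
    rw [← Polynomial.coeff_sub, ← Matrix.sub_apply, h2]
  have e1 : ((A.map C * M.adjugate) a c).coeff (k+1)
      = ∑ b, A a b * ((M.adjugate) b c).coeff (k+1) := by
    rw [Matrix.mul_apply, Polynomial.finset_sum_coeff]
    exact Finset.sum_congr rfl fun b _ => by simp [Matrix.map_apply, coeff_C_mul]
  have e2 : (((X:ℂ[X]) • M.adjugate) a c).coeff (k+1) = ((M.adjugate) a c).coeff k := by
    simp [Matrix.smul_apply, smul_eq_mul, Polynomial.coeff_X_mul]
  have e3 : ((M.det • (1 : Matrix (Fin n) (Fin n) ℂ[X])) a c).coeff (k+1)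
      = M.det.coeff (k+1) * (if a = c then 1 else 0) := by
    by_cases h : a = c <;> simp [Matrix.smul_apply, Matrix.one_apply, h, smul_eq_mul]
  rw [e1, e2, e3] at h3
  simpa [Matrix.sub_apply, Matrix.mul_apply, Matrix.smul_apply, Matrix.one_apply,
    smul_eq_mul] using h3

noncomputable def adjCoeff (n : ℕ) (A : Matrix (Fin n) (Fin n) ℂ) (k : ℕ) :
    Matrix (Fin n) (Fin n) ℂ :=
  Matrix.of fun i j => (((A.map C - (X:ℂ[X]) • 1).adjugate) i j).coeff k

lemma detM_coeff_n (n : ℕ) (A : Matrix (Fin n) (Fin n) ℂ) :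
    ((A.map C - (X:ℂ[X]) • 1).det).coeff n = (-1:ℂ)^n := by
  have hM : A.map C - (X:ℂ[X]) • 1 = -(charmatrix A) := by
    ext i j; by_cases h : i = j <;>
      simp [charmatrix_apply, h, Matrix.one_apply, Pi.single_apply]
  have hcp : (charmatrix A).det = A.charpoly := rfl
  rw [hM, Matrix.det_neg, hcp]
  have hnd : (A.charpoly).natDegree = n := by
    rw [Matrix.charpoly_natDegree_eq_dim]; simp
  have hc1 : (A.charpoly).coeff n = 1 := by
    have := (Matrix.charpoly_monic A).coeff_natDegree
    rwa [hnd] at this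
  rw [show ((-1 : ℂ[X])) = C (-1) by simp, ← C_pow, coeff_C_mul, hc1]
  simp

lemma adjCoeff_formula (n : ℕ) (hn : 1 ≤ n) (A : Matrix (Fin n) (Fin n) ℂ) :
    ∀ i, i < n → adjCoeff n A (n - 1 - i)
      = ((-1:ℂ)^(n-1)) • A ^ i
        - ∑ j ∈ Finset.range i, (((A.map C - (X:ℂ[X]) • 1).det).coeff (n - i + j)) • A ^ j := by
  intro i
  induction i with
  | zero =>
    intro _
    have h := rec_coeff n A (n-1)
    have hn1 : n - 1 + 1 = n := by omega
    rw [hn1] at h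
    have hz : (Matrix.of fun i j => (((A.map C - (X:ℂ[X]) • 1).adjugate) i j).coeff n)
        = (0 : Matrix (Fin n) (Fin n) ℂ) := by
      ext a b; exact adj_entry_coeff_zero n A a b n le_rfl hn
    rw [hz, Matrix.mul_zero, zero_sub, detM_coeff_n] at h
    have h2 : (Matrix.of fun i j => (((A.map C - (X:ℂ[X]) • 1).adjugate) i j).coeff (n-1))
        = -((-1:ℂ)^n • (1 : Matrix (Fin n) (Fin n) ℂ)) := by
      rw [← h]; simp
    have hpow : -((-1:ℂ)^n) = (-1:ℂ)^(n-1) := by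
      have : (-1:ℂ)^n = (-1)^(n-1) * (-1) := by
        rw [← pow_succ]; congr 1; omega
      rw [this]; ring
    show adjCoeff n A (n - 1 - 0) = _
    rw [show n - 1 - 0 = n - 1 by omega]
    show (Matrix.of fun i j => (((A.map C - (X:ℂ[X]) • 1).adjugate) i j).coeff (n-1)) = _
    rw [h2]
    rw [Finset.sum_range_zero, sub_zero, pow_zero, ← hpow]
    ext a b; simp
  | succ i ih =>
    intro hi
    set d := ((A.map C - (X:ℂ[X]) • 1).det) with hd
    have h := rec_coeff n A (n - 2 - i)
    have e : n - 2 - i + 1 = n - 1 - i := by omega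
    rw [e] at h
    have hW : (Matrix.of fun a b => (((A.map C - (X:ℂ[X]) • 1).adjugate) a b).coeff (n-1-i))
        = adjCoeff n A (n - 1 - i) := rfl
    rw [hW, ih (by omega)] at h
    have e2 : n - 1 - (i+1) = n - 2 - i := by omega
    rw [e2]
    have hsolve : adjCoeff n A (n - 2 - i)
        = A * (((-1:ℂ)^(n-1)) • A ^ i
            - ∑ j ∈ Finset.range i, (d.coeff (n - i + j)) • A ^ j)
          - (d.coeff (n - 1 - i)) • 1 := by
      rw [← h]; show _ = _ - (_ - adjCoeff n A (n-2-i)); rw [sub_sub_cancel]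
    rw [hsolve]
    have hsum : ∑ j ∈ Finset.range (i+1), (d.coeff (n - (i+1) + j)) • A ^ j
        = (d.coeff (n - 1 - i)) • (1 : Matrix (Fin n) (Fin n) ℂ)
          + ∑ j ∈ Finset.range i, (d.coeff (n - i + j)) • A ^ (j+1) := by
      rw [Finset.sum_range_succ']
      rw [add_comm]
      congr 1
      · rw [pow_zero]; congr 2; omega
      · refine Finset.sum_congr rfl fun j hj => ?_
        congr 2; omega
    rw [hsum, Matrix.mul_sub, Matrix.mul_sum]
    simp_rw [mul_smul_comm, ← pow_succ']
    abel

lemma markov_zero_complex (n : ℕ) (hn : 1 ≤ n) (A : Matrix (Fin n) (Fin n) ℂ)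
    (E : Matrix (Fin n) (Fin 1) ℂ) (Co : Matrix (Fin 1) (Fin n) ℂ)
    (hq : ∀ k, 1 ≤ k →
      ((Co.map C * (A.map C - (X:ℂ[X]) • 1).adjugate * E.map C) 0 0).coeff k = 0) :
    ∀ i, i + 2 ≤ n → (Co * A ^ i * E) 0 0 = 0 := by
  have hco : ∀ k, ((Co.map C * (A.map C - (X:ℂ[X]) • 1).adjugate * E.map C) 0 0).coeff k
      = (Co * adjCoeff n A k * E) 0 0 := by
    intro k
    simp only [Matrix.mul_apply, Polynomial.finset_sum_coeff, adjCoeff, Matrix.map_apply,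
      Polynomial.coeff_mul_C, Finset.sum_mul, Polynomial.coeff_C_mul, Matrix.of_apply]
  intro i
  induction i using Nat.strong_induction_on with
  | _ i IH =>
    intro hi
    have h0 := hq (n - 1 - i) (by omega)
    rw [hco, adjCoeff_formula n hn A i (by omega)] at h0
    set d := ((A.map C - (X:ℂ[X]) • 1).det) with hd
    have h1 : (Co * (((-1:ℂ)^(n-1)) • A ^ i
          - ∑ j ∈ Finset.range i, (d.coeff (n - i + j)) • A ^ j) * E) 0 0
        = (-1:ℂ)^(n-1) * ((Co * A ^ i * E) 0 0)
          - ∑ j ∈ Finset.range i, (d.coeff (n - i + j)) * ((Co * A ^ j * E) 0 0) := by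
      rw [Matrix.mul_sub, Matrix.sub_mul, Matrix.mul_sum, Matrix.sum_mul]
      simp [Matrix.sub_apply, Matrix.sum_apply, mul_smul_comm, smul_mul_assoc,
        Matrix.smul_apply, smul_eq_mul]
    rw [h1] at h0
    have hsum : ∑ j ∈ Finset.range i, (d.coeff (n - i + j)) * ((Co * A ^ j * E) 0 0) = 0 := by
      refine Finset.sum_eq_zero fun j hj => ?_
      rw [IH j (Finset.mem_range.mp hj) (by have := Finset.mem_range.mp hj; omega)]
      ring
    rw [hsum, sub_zero] at h0
    have hne : (-1:ℂ)^(n-1) ≠ 0 := pow_ne_zero _ (by norm_num)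
    exact (mul_eq_zero.mp h0).resolve_left hne

set_option synthInstance.maxHeartbeats 1000000 in
lemma P_eq_neg_q (n : ℕ) (A : Matrix (Fin n) (Fin n) ℂ)
    (E : Matrix (Fin n) (Fin 1) ℂ) (Co : Matrix (Fin 1) (Fin n) ℂ) :
    (Matrix.fromBlocks (A.map C - (X:ℂ[X]) • 1) (E.map C) (Co.map C) 0).det
      = -((Co.map C * (A.map C - (X:ℂ[X]) • 1).adjugate * E.map C) 0 0) := by
  set M := A.map C - (X:ℂ[X]) • 1 with hM
  set K := FractionRing ℂ[X]
  set φ : ℂ[X] →+* K := algebraMap ℂ[X] K with hφ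
  have hinj : Function.Injective φ := IsFractionRing.injective _ _
  apply hinj
  have hdet0 : M.det ≠ 0 := by
    have hMc : M = -(charmatrix A) := by
      ext i j; by_cases h : i = j <;>
        simp [hM, charmatrix_apply, h, Matrix.one_apply, Pi.single_apply]
    rw [hMc, Matrix.det_neg]
    have hcp : (charmatrix A).det = A.charpoly := rfl
    rw [hcp]
    exact mul_ne_zero (pow_ne_zero _ (by norm_num)) (Matrix.charpoly_monic A).ne_zero
  have hφd : φ M.det ≠ 0 := fun hc => hdet0 (by simpa using (map_eq_zero_iff φ hinj).mp hc)
  have hMK : IsUnit ((M.map φ).det) := by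
    rw [← RingHom.mapMatrix_apply, ← RingHom.map_det]
    exact isUnit_iff_ne_zero.mpr hφd
  haveI : Invertible (M.map φ) := Matrix.invertibleOfIsUnitDet _ hMK
  have hL : φ ((Matrix.fromBlocks M (E.map C) (Co.map C) 0).det)
      = (Matrix.fromBlocks (M.map φ) ((E.map C).map φ) ((Co.map C).map φ) 0).det := by
    rw [RingHom.map_det, RingHom.mapMatrix_apply, Matrix.fromBlocks_map]
    congr 1
    simp
  rw [hL, Matrix.det_fromBlocks₁₁, invOf_eq_nonsing_inv, Matrix.inv_def]
  have hadj : (M.map φ).adjugate = (M.adjugate).map φ := by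
    have := RingHom.map_adjugate φ M
    simpa [RingHom.mapMatrix_apply] using this.symm
  have hdetval : (M.map φ).det = φ M.det := by
    rw [← RingHom.mapMatrix_apply, ← RingHom.map_det]
  have hent : ((0 : Matrix (Fin 1) (Fin 1) K)
        - (Co.map C).map φ * (Ring.inverse (M.map φ).det • (M.map φ).adjugate) * (E.map C).map φ).det
      = -(Ring.inverse (φ M.det) * φ (((Co.map C) * M.adjugate * (E.map C)) 0 0)) := by
    rw [hadj, hdetval, Matrix.mul_smul, Matrix.smul_mul, ← Matrix.map_mul, ← Matrix.map_mul,
      Matrix.det_fin_one, Matrix.sub_apply, Matrix.zero_apply, Matrix.smul_apply,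
      Matrix.map_apply, zero_sub, smul_eq_mul]
  rw [hent, hdetval, Ring.inverse_eq_inv', map_neg, mul_neg, ← mul_assoc,
    mul_inv_cancel₀ hφd, one_mul]

lemma rank_full_det_ne (n : ℕ) (M : Matrix (Fin n ⊕ Fin 1) (Fin n ⊕ Fin 1) ℂ)
    (h : M.rank = n + 1) : M.det ≠ 0 := by
  have hsurj : Function.Surjective M.mulVec := by
    have htop : LinearMap.range M.mulVecLin = ⊤ := by
      apply Submodule.eq_top_of_finrank_eq
      rw [Module.finrank_pi]
      simpa [Matrix.rank] using h
    intro y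
    obtain ⟨x, hx⟩ := LinearMap.range_eq_top.mp htop y
    exact ⟨x, hx⟩
  have := (Matrix.isUnit_iff_isUnit_det M).mp (Matrix.mulVec_surjective_iff_isUnit.mp hsurj)
  exact this.ne_zero


end Aux

open Polynomial in
lemma rosen_eval (n : ℕ) (A0 : Matrix (Fin n) (Fin n) ℝ)
    (E0 : Matrix (Fin n) (Fin 1) ℝ) (C0 : Matrix (Fin 1) (Fin n) ℝ) (z : ℂ) :
    ((Matrix.fromBlocks ((A0.map Complex.ofReal).map C - (X:ℂ[X]) • 1)
        ((E0.map Complex.ofReal).map C) ((C0.map Complex.ofReal).map C) 0).det).eval z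
      = (rosenbrock n A0 E0 C0 z).det := by
  have key : (Matrix.fromBlocks ((A0.map Complex.ofReal).map C - (X:ℂ[X]) • 1)
        ((E0.map Complex.ofReal).map C) ((C0.map Complex.ofReal).map C)
        (0 : Matrix (Fin 1) (Fin 1) ℂ[X])).map (Polynomial.evalRingHom z)
      = rosenbrock n A0 E0 C0 z := by
    ext i j
    rcases i with i | i <;> rcases j with j | j <;>
      simp only [rosenbrock, Matrix.map_apply, Matrix.fromBlocks, Matrix.of_apply,
        Sum.elim_inl, Sum.elim_inr, Matrix.sub_apply, Matrix.smul_apply, Matrix.one_apply,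
        Matrix.zero_apply, coe_evalRingHom, eval_sub, eval_C, eval_zero, eval_smul,
        smul_eq_mul, eval_mul, eval_X, eval_one, apply_ite (eval z)]
  rw [← key]
  exact RingHom.map_det (evalRingHom z) _


lemma augA_pow_mul_augE (n : ℕ) (A0 : Matrix (Fin n) (Fin n) ℝ)
    (E0 : Matrix (Fin n) (Fin 1) ℝ) (j : ℕ) :
    (augA n A0 E0) ^ j * augE n = Matrix.of (fun (i : Fin (n+1)) (_ : Fin 1) =>
      if h : (i : ℕ) < n then ((∑ k ∈ Finset.range j, A0 ^ k * E0) ⟨i, h⟩ 0) else 1) := by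
  induction j with
  | zero =>
    ext i k
    rw [pow_zero, Matrix.one_mul]
    by_cases h : (i : ℕ) < n
    · simp [augE, h, show ¬((i:ℕ) = n) by omega]
    · simp [augE, h, show (i:ℕ) = n by omega]
  | succ j ih =>
    rw [pow_succ', Matrix.mul_assoc, ih]
    ext i k
    rw [Matrix.mul_apply, Fin.sum_univ_castSucc]
    by_cases hi : (i : ℕ) < n
    · simp only [augA, Matrix.of_apply, Fin.coe_castSucc, Fin.is_lt, dif_pos, Fin.eta,
        Fin.val_last, lt_irrefl, dif_neg (lt_irrefl n).elim, hi]
      simp only [dite_false, mul_one]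
      rw [Finset.sum_range_succ', Matrix.add_apply, pow_zero, Matrix.one_mul]
      simp_rw [pow_succ', Matrix.mul_assoc, ← Matrix.mul_sum]
      rw [Matrix.mul_apply]
    · simp only [augA, Matrix.of_apply, Fin.coe_castSucc, Fin.is_lt, dif_pos, Fin.eta,
        Fin.val_last, hi]
      simp

lemma augC_mul_pow (n : ℕ) (A0 : Matrix (Fin n) (Fin n) ℝ) (E0 : Matrix (Fin n) (Fin 1) ℝ)
    (C0 : Matrix (Fin 1) (Fin n) ℝ)
    (hmk : ∀ i, i + 2 ≤ n → (C0 * A0 ^ i * E0) 0 0 = 0)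
    (j : ℕ) (hj : j + 1 ≤ n) :
    augC n C0 * ((augA n A0 E0) ^ j * augE n) = 0 := by
  rw [augA_pow_mul_augE]
  ext a b
  rw [Matrix.mul_apply, Fin.sum_univ_castSucc]
  simp only [augC, Matrix.of_apply, Fin.coe_castSucc, Fin.is_lt, dif_pos, Fin.eta,
    Fin.val_last, Matrix.zero_apply]
  rw [dif_neg (lt_irrefl n), zero_mul, add_zero]
  rw [← Matrix.mul_apply, Matrix.mul_sum, Matrix.sum_apply]
  refine Finset.sum_eq_zero fun k hk => ?_
  rw [← Matrix.mul_assoc, Subsingleton.elim a 0]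
  exact hmk k (by have := Finset.mem_range.mp hk; omega)

lemma F_pow_mul_augE (n : ℕ) (A0 : Matrix (Fin n) (Fin n) ℝ) (E0 : Matrix (Fin n) (Fin 1) ℝ)
    (C0 : Matrix (Fin 1) (Fin n) ℝ) (L : Matrix (Fin (n + 1)) (Fin 1) ℝ)
    (hmk : ∀ i, i + 2 ≤ n → (C0 * A0 ^ i * E0) 0 0 = 0) :
    ∀ j, j ≤ n → (augA n A0 E0 - L * augC n C0) ^ j * augE n = (augA n A0 E0) ^ j * augE n := by
  intro j
  induction j with
  | zero => intro _; rfl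
  | succ j ih =>
    intro hj
    rw [pow_succ', Matrix.mul_assoc, ih (by omega), Matrix.sub_mul, Matrix.mul_assoc,
      augC_mul_pow n A0 E0 C0 hmk j (by omega), Matrix.mul_zero, sub_zero,
      pow_succ', Matrix.mul_assoc]

theorem stmt7 (n : ℕ) (hn : 1 ≤ n)
    (A0 : Matrix (Fin n) (Fin n) ℝ) (E0 : Matrix (Fin n) (Fin 1) ℝ)
    (C0 : Matrix (Fin 1) (Fin n) ℝ)
    (hobs : IsUnit (obsMat A0 C0).det)
    (hrank : ∀ z : ℂ, (rosenbrock n A0 E0 C0 z).rank = n + 1)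
    (L : Matrix (Fin (n + 1)) (Fin 1) ℝ)
    (hL : (augA n A0 E0 - L * augC n C0).charpoly = Polynomial.X ^ (n + 1)) :
    ∀ j : ℕ, j ≤ n →
      (((augA n A0 E0 - L * augC n C0) ^ j) * augE n) (Fin.last n) 0 = 1 := by
  have hmk : ∀ i, i + 2 ≤ n → (C0 * A0 ^ i * E0) 0 0 = 0 := by
    intro i hi
    set Ac := A0.map Complex.ofReal with hAc
    set Ec := E0.map Complex.ofReal with hEc
    set Cc := C0.map Complex.ofReal with hCc
    have hq : ∀ k, 1 ≤ k →
        ((Cc.map Polynomial.C * (Ac.map Polynomial.C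
          - (Polynomial.X : Polynomial ℂ) • 1).adjugate * Ec.map Polynomial.C) 0 0).coeff k
          = 0 := by
      intro k hk
      have hP := P_eq_neg_q n Ac Ec Cc
      set P := (Matrix.fromBlocks (Ac.map Polynomial.C - (Polynomial.X : Polynomial ℂ) • 1)
        (Ec.map Polynomial.C) (Cc.map Polynomial.C) 0).det with hPdef
      have hne : ∀ z : ℂ, P.eval z ≠ 0 := by
        intro z
        rw [hPdef, hAc, hEc, hCc, rosen_eval n A0 E0 C0 z]
        exact rank_full_det_ne n _ (hrank z)
      have hdeg : P.natDegree = 0 := by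
        by_contra hd
        have hP0 : P ≠ 0 := fun h => hd (by rw [h]; simp)
        obtain ⟨z, hz⟩ := IsAlgClosed.exists_root P (by
          rw [Polynomial.degree_eq_natDegree hP0]
          exact_mod_cast hd)
        exact hne z hz
      have hPk : P.coeff k = 0 :=
        Polynomial.coeff_eq_zero_of_natDegree_lt (by omega)
      have hq' : ((Cc.map Polynomial.C * (Ac.map Polynomial.C
          - (Polynomial.X : Polynomial ℂ) • 1).adjugate * Ec.map Polynomial.C) 0 0) = -P := by
        rw [hP, neg_neg]
      rw [hq', Polynomial.coeff_neg, hPk, neg_zero]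
    have hc := markov_zero_complex n hn Ac Ec Cc hq i hi
    have hpow : Ac ^ i = (A0 ^ i).map Complex.ofReal := by
      have := map_pow (RingHom.mapMatrix Complex.ofRealHom) A0 i
      simp only [RingHom.mapMatrix_apply] at this
      rw [hAc]
      exact this.symm
    have htrans : (Cc * Ac ^ i * Ec) 0 0 = Complex.ofReal ((C0 * A0 ^ i * E0) 0 0) := by
      rw [hpow, hCc, hEc]
      rw [show C0.map Complex.ofReal = C0.map Complex.ofRealHom from rfl,
        show (A0 ^ i).map Complex.ofReal = (A0 ^ i).map Complex.ofRealHom from rfl,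
        show E0.map Complex.ofReal = E0.map Complex.ofRealHom from rfl,
        ← Matrix.map_mul, ← Matrix.map_mul, Matrix.map_apply]
      rfl
    rw [htrans] at hc
    exact_mod_cast hc
  intro j hj
  rw [F_pow_mul_augE n A0 E0 C0 L hmk j hj, augA_pow_mul_augE]
  simp
end

section
/- Let n ≥ 0 and let k be an integer with k ≥ n+2. Define h : ℝ → ℝ by h(ω) = Σ_{i=1}^{n+1} C(k−1, i−1) · (1−ω)^{i−1} · ω^{k−i}. Then for every ω ∈ ℝ, h has derivative at ω equal to (k−n−1) · C(k−1, n) · (1−ω)^{n} · ω^{k−n−2}, i.e., h'(ω) = (1/n!) · (1−ω)^n · (k−n−1) · (∏_{j=1}^{n}(k−j)) · ω^{k−n−2}. -/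
/-!
The sum is the partial sum `∑_{i ≤ n} C(m, i) (1 - w)^i w^(m - i)`, `m = k - 1`, of the
binomial expansion of `((1 - w) + w)^m`. Differentiating term by term, the identity
`(m - i) C(m, i) = (i + 1) C(m, i + 1)` makes consecutive contributions cancel, so by induction
on `n` only the last one survives. The product form is `n! C(k - 1, n) = (k - 1)(k - 2)⋯(k - n)`.
-/

open Finset

theorem sum_Icc_one_eq_sum_range {M : Type*} [AddCommMonoid M] (f : ℕ → M) (n : ℕ) :
    ∑ i ∈ Icc 1 (n + 1), f i = ∑ i ∈ range (n + 1), f (i + 1) := by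
  rw [← Ico_add_one_right_eq_Icc, sum_Ico_eq_sum_range]
  simp only [add_tsub_cancel_right, add_comm 1]

theorem prod_Icc_one_natCast_sub_eq_descFactorial {R : Type*} [CommRing R] (n k : ℕ)
    (hk : 0 < k) :
    ∏ j ∈ Icc 1 n, ((k : R) - j) = (k - 1).descFactorial n := by
  rw [← descPochhammer_eval_eq_descFactorial, descPochhammer_eval_eq_prod_range,
    ← Ico_add_one_right_eq_Icc, prod_Ico_eq_prod_range]
  refine prod_congr (by simp) fun i _ => ?_
  push_cast [Nat.cast_sub hk]
  ring

theorem natCast_sub_mul_choose {R : Type*} [Semiring R] (m n : ℕ) :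
    ((m - n : ℕ) : R) * m.choose n = (n + 1) * m.choose (n + 1) := by
  exact_mod_cast by rw [mul_comm, ← Nat.choose_succ_right_eq, mul_comm]

variable {𝕜 : Type*} [NontriviallyNormedField 𝕜]

theorem hasDerivAt_sum_range_choose_mul_one_sub_pow_mul_pow (m n : ℕ) (x : 𝕜) :
    HasDerivAt (fun w => ∑ i ∈ range (n + 1), (m.choose i : 𝕜) * (1 - w) ^ i * w ^ (m - i))
      ((m - n : ℕ) * m.choose n * (1 - x) ^ n * x ^ (m - n - 1)) x := by
  induction n with
  | zero => simpa using hasDerivAt_pow m x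
  | succ n ih =>
    have hterm :
        HasDerivAt (fun w => (m.choose (n + 1) : 𝕜) * (1 - w) ^ (n + 1) * w ^ (m - (n + 1)))
          (m.choose (n + 1) * ((n + 1 : ℕ) * (1 - x) ^ n * (-1)) * x ^ (m - (n + 1))
            + m.choose (n + 1) * (1 - x) ^ (n + 1)
              * ((m - (n + 1) : ℕ) * x ^ (m - (n + 1) - 1))) x :=
      ((((hasDerivAt_id x).const_sub 1).pow (n + 1)).const_mul _).mul (hasDerivAt_pow _ x)
        |>.congr_deriv (by simp)
    simp only [sum_range_succ _ (n + 1)]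
    refine (ih.add hterm).congr_deriv ?_
    rw [← Nat.sub_sub, natCast_sub_mul_choose]
    push_cast
    ring

theorem stmt10 (n k : ℕ) (hk : n + 2 ≤ k) (ω : ℝ) :
    HasDerivAt
      (fun w : ℝ => ∑ i ∈ Finset.Icc 1 (n + 1),
        (Nat.choose (k - 1) (i - 1) : ℝ) * (1 - w) ^ (i - 1) * w ^ (k - i))
      (((k - n - 1 : ℕ) : ℝ) * (Nat.choose (k - 1) n : ℝ) * (1 - ω) ^ n * ω ^ (k - n - 2)) ω
    ∧ ((k - n - 1 : ℕ) : ℝ) * (Nat.choose (k - 1) n : ℝ) * (1 - ω) ^ n * ω ^ (k - n - 2)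
      = (1 / (Nat.factorial n : ℝ)) * (1 - ω) ^ n * ((k - n - 1 : ℕ) : ℝ)
        * (∏ j ∈ Finset.Icc 1 n, ((k : ℝ) - (j : ℝ))) * ω ^ (k - n - 2) := by
  constructor
  · simp only [sum_Icc_one_eq_sum_range, add_tsub_cancel_right]
    have hderiv := hasDerivAt_sum_range_choose_mul_one_sub_pow_mul_pow (k - 1) n ω
    simp only [Nat.sub_sub, add_comm 1] at hderiv ⊢
    exact hderiv
  · rw [prod_Icc_one_natCast_sub_eq_descFactorial n k (by omega),
      Nat.descFactorial_eq_factorial_mul_choose]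
    push_cast
    field_simp
end

section
/- Let n ≥ 0 and let k be an integer with k ≥ n+2. Define h : ℝ → ℝ by h(ω) = Σ_{i=1}^{n+1} C(k−1, i−1) · (1−ω)^{i−1} · ω^{k−i}. Then h is strictly monotone increasing on the half-open interval [0, 1): for all ω1, ω2 with 0 ≤ ω1 < ω2 < 1, h(ω1) < h(ω2). -/
/-!
Writing `m = k - 1` and reindexing `j = i - 1`, the sum is
`T(ω) = ∑_{j ≤ n} C(m, j) (1 - ω)^j ω^(m - j)`, the probability that a binomial `(m, 1 - ω)`
variable is at most `n`. Differentiating term by term, `(j + 1) C(m, j + 1) = (m - j) C(m, j)`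
makes the derivative telescope to `(n + 1) C(m, n + 1) (1 - ω)^n ω^(m - n - 1)`, which is
positive on `(0, 1)` as soon as `n + 1 ≤ m`.
-/

open Finset

noncomputable def binomialLowerTail (m n : ℕ) (ω : ℝ) : ℝ :=
  ∑ j ∈ range (n + 1), (m.choose j : ℝ) * (1 - ω) ^ j * ω ^ (m - j)

-- The derivative is written as `f (j + 1) - f j` with `f j = j C(m, j) (1 - x)^(j - 1) x^(m - j)`,
-- so that summing over `j` telescopes.
lemma hasDerivAt_choose_mul_one_sub_pow_mul_pow (m j : ℕ) (x : ℝ) :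
    HasDerivAt (fun ω : ℝ => (m.choose j : ℝ) * (1 - ω) ^ j * ω ^ (m - j))
      (((j + 1 : ℕ) : ℝ) * m.choose (j + 1) * (1 - x) ^ (j + 1 - 1) * x ^ (m - (j + 1))
        - j * m.choose j * (1 - x) ^ (j - 1) * x ^ (m - j)) x := by
  have hsub : HasDerivAt (fun ω : ℝ => (1 - ω) ^ j) (j * (1 - x) ^ (j - 1) * (-1)) x :=
    ((hasDerivAt_id x).const_sub 1).pow j
  have hpow : HasDerivAt (fun ω : ℝ => ω ^ (m - j)) (((m - j : ℕ) : ℝ) * x ^ (m - j - 1)) x := by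
    simpa using hasDerivAt_pow (m - j) x
  refine ((hsub.const_mul (m.choose j : ℝ)).mul hpow).congr_deriv ?_
  have hchoose : (m.choose (j + 1) : ℝ) * (j + 1) = m.choose j * ((m - j : ℕ) : ℝ) := by
    exact_mod_cast Nat.choose_succ_right_eq m j
  rw [Nat.add_sub_cancel, Nat.sub_sub]
  push_cast
  linear_combination -((1 - x) ^ j * x ^ (m - (j + 1))) * hchoose

lemma hasDerivAt_binomialLowerTail (m n : ℕ) (x : ℝ) :
    HasDerivAt (binomialLowerTail m n)
      ((n + 1) * m.choose (n + 1) * (1 - x) ^ n * x ^ (m - (n + 1))) x := by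
  have hsum := HasDerivAt.fun_sum (u := range (n + 1))
    fun j _ => hasDerivAt_choose_mul_one_sub_pow_mul_pow m j x
  rw [sum_range_sub (fun j => (j : ℝ) * m.choose j * (1 - x) ^ (j - 1) * x ^ (m - j))] at hsum
  refine hsum.congr_deriv ?_
  simp

lemma strictMonoOn_binomialLowerTail {m n : ℕ} (hnm : n + 1 ≤ m) :
    StrictMonoOn (binomialLowerTail m n) (Set.Icc 0 1) := by
  refine strictMonoOn_of_deriv_pos (convex_Icc 0 1)
    (fun x _ => (hasDerivAt_binomialLowerTail m n x).continuousAt.continuousWithinAt) ?_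
  intro x hx
  rw [interior_Icc] at hx
  obtain ⟨hx0, hx1⟩ := hx
  rw [(hasDerivAt_binomialLowerTail m n x).deriv]
  have hchoose : (0 : ℝ) < m.choose (n + 1) := by exact_mod_cast Nat.choose_pos hnm
  have h1x : 0 < 1 - x := by linarith
  positivity

lemma sum_Icc_eq_binomialLowerTail (n k : ℕ) (ω : ℝ) :
    ∑ i ∈ Icc 1 (n + 1), (k - 1).choose (i - 1) * (1 - ω) ^ (i - 1) * ω ^ (k - i)
      = binomialLowerTail (k - 1) n ω := by
  rw [binomialLowerTail, ← Ico_add_one_right_eq_Icc, sum_Ico_eq_sum_range]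
  refine sum_congr rfl fun j _ => ?_
  rw [show 1 + j - 1 = j by omega, show k - (1 + j) = k - 1 - j by omega]

theorem stmt11 (n k : ℕ) (hk : n + 2 ≤ k) :
    ∀ ω1 ω2 : ℝ, 0 ≤ ω1 → ω1 < ω2 → ω2 < 1 →
      (∑ i ∈ Finset.Icc 1 (n + 1),
          (Nat.choose (k - 1) (i - 1) : ℝ) * (1 - ω1) ^ (i - 1) * ω1 ^ (k - i))
        < ∑ i ∈ Finset.Icc 1 (n + 1),
            (Nat.choose (k - 1) (i - 1) : ℝ) * (1 - ω2) ^ (i - 1) * ω2 ^ (k - i) := by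
  intro ω1 ω2 h0 h12 h21
  rw [sum_Icc_eq_binomialLowerTail, sum_Icc_eq_binomialLowerTail]
  exact strictMonoOn_binomialLowerTail (by omega) ⟨h0, by linarith⟩ ⟨by linarith, h21.le⟩ h12
end

section
/- Let n ≥ 0 and ω ∈ ℝ. Define the real (n+1)×(n+1) lower-triangular matrix Q2 (1-indexed) by Q2_{i,j} = (−1)^{i−j} · C(n+1, i−j) · ω^{i−j} for i ≥ j and Q2_{i,j} = 0 for i < j. Then in the polynomial ring ℝ[X]: Σ_{j=1}^{n+1} (Σ_{i=1}^{n+1} Q2_{i,j}) · X^{j−1} = Σ_{i=1}^{n+1} (1−ω)^{i−1} · (X − ω)^{n+1−i}. Equivalently, Σ_{j=0}^{n} (Σ_{s=0}^{n−j} (−1)^{s} C(n+1, s) ω^{s}) · X^{j} = Σ_{i=1}^{n+1} (1−ω)^{i−1} (X − ω)^{n+1−i}. -/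
open Matrix Polynomial Finset

/-- The lower-triangular similarity transformation `Q2` of equations (21)–(26):
`Q2_{i,j} = (−1)^{i−j}·C(n+1, i−j)·ω^{i−j}` for `i ≥ j` (1-indexed), `0` otherwise. -/
noncomputable def Q2mat (n : ℕ) (ω : ℝ) : Matrix (Fin (n + 1)) (Fin (n + 1)) ℝ :=
  Matrix.of fun i j =>
    if (j : ℕ) ≤ (i : ℕ) then
      (-1 : ℝ) ^ ((i : ℕ) - (j : ℕ)) * (Nat.choose (n + 1) ((i : ℕ) - (j : ℕ)) : ℝ)
        * ω ^ ((i : ℕ) - (j : ℕ))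
    else 0

lemma coreA (n : ℕ) (ω : ℝ) :
    (∑ j ∈ range (n+1),
      Polynomial.C (∑ s ∈ range (n+1-j), (-1:ℝ)^s * (Nat.choose (n+1) s : ℝ) * ω^s) * X^j)
      * (X - 1)
    = (X - Polynomial.C ω)^(n+1) - Polynomial.C ((1-ω)^(n+1)) := by
  have hswap :
      (∑ j ∈ range (n+1), ∑ s ∈ range (n+1-j),
        Polynomial.C ((-1:ℝ)^s * (Nat.choose (n+1) s : ℝ) * ω^s) * X^j * (X-1))
      = ∑ s ∈ range (n+1), ∑ j ∈ range (n+1-s),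
        Polynomial.C ((-1:ℝ)^s * (Nat.choose (n+1) s : ℝ) * ω^s) * X^j * (X-1) := by
    apply Finset.sum_comm'
    intro x y
    simp only [mem_range]
    omega
  have hx : (X - Polynomial.C ω)^(n+1)
      = ∑ s ∈ range (n+2),
        Polynomial.C ((-1:ℝ)^s * (Nat.choose (n+1) s : ℝ) * ω^s) * X^(n+1-s) := by
    rw [sub_eq_add_neg, add_pow, ← Finset.sum_range_reflect]
    refine Finset.sum_congr rfl fun s hs => ?_
    simp only [mem_range] at hs
    have e1 : n + 2 - 1 - s = n + 1 - s := by omega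
    have e2 : n + 1 - (n + 1 - s) = s := by omega
    rw [e1, e2, Nat.choose_symm (by omega : s ≤ n+1)]
    simp only [_root_.map_mul, _root_.map_pow, _root_.map_neg, _root_.map_one, Polynomial.C_eq_natCast]
    ring
  have hc : Polynomial.C ((1-ω)^(n+1))
      = ∑ s ∈ range (n+2),
        Polynomial.C ((-1:ℝ)^s * (Nat.choose (n+1) s : ℝ) * ω^s) := by
    rw [← _root_.map_sum]
    congr 1
    rw [sub_eq_add_neg, add_pow, ← Finset.sum_range_reflect]
    refine Finset.sum_congr rfl fun s hs => ?_
    simp only [mem_range] at hs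
    have e1 : n + 2 - 1 - s = n + 1 - s := by omega
    have e2 : n + 1 - (n + 1 - s) = s := by omega
    rw [e1, e2, Nat.choose_symm (by omega : s ≤ n+1)]
    ring
  calc (∑ j ∈ range (n+1),
      Polynomial.C (∑ s ∈ range (n+1-j), (-1:ℝ)^s * (Nat.choose (n+1) s : ℝ) * ω^s) * X^j) * (X-1)
      = ∑ j ∈ range (n+1), ∑ s ∈ range (n+1-j),
        Polynomial.C ((-1:ℝ)^s * (Nat.choose (n+1) s : ℝ) * ω^s) * X^j * (X-1) := by
        rw [Finset.sum_mul]
        refine Finset.sum_congr rfl fun j _ => ?_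
        rw [_root_.map_sum, Finset.sum_mul, Finset.sum_mul]
    _ = ∑ s ∈ range (n+1),
        Polynomial.C ((-1:ℝ)^s * (Nat.choose (n+1) s : ℝ) * ω^s) * (X^(n+1-s) - 1) := by
        rw [hswap]
        refine Finset.sum_congr rfl fun s hs => ?_
        rw [← geom_sum_mul (X : ℝ[X]) (n+1-s), Finset.sum_mul, Finset.mul_sum]
        refine Finset.sum_congr rfl fun j _ => ?_
        ring
    _ = (∑ s ∈ range (n+1),
          Polynomial.C ((-1:ℝ)^s * (Nat.choose (n+1) s : ℝ) * ω^s) * X^(n+1-s))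
        - ∑ s ∈ range (n+1),
          Polynomial.C ((-1:ℝ)^s * (Nat.choose (n+1) s : ℝ) * ω^s) := by
        rw [← Finset.sum_sub_distrib]
        refine Finset.sum_congr rfl fun s _ => ?_
        ring
    _ = (X - Polynomial.C ω)^(n+1) - Polynomial.C ((1-ω)^(n+1)) := by
        rw [Finset.sum_range_succ] at hx hc
        have e : n + 1 - (n + 1) = 0 := by omega
        rw [e, pow_zero, mul_one] at hx
        rw [hx, hc]
        ring

lemma coreB (n : ℕ) (ω : ℝ) :
    (∑ k ∈ range (n+1), Polynomial.C ((1-ω)^k) * (X - Polynomial.C ω)^(n-k)) * (X - 1)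
    = (X - Polynomial.C ω)^(n+1) - Polynomial.C ((1-ω)^(n+1)) := by
  have h := geom_sum₂_mul (X - Polynomial.C ω) (Polynomial.C (1-ω) : ℝ[X]) (n+1)
  rw [← Finset.sum_range_reflect] at h
  have hxy : (X - Polynomial.C ω) - (Polynomial.C (1-ω) : ℝ[X]) = X - 1 := by
    rw [_root_.map_sub, _root_.map_one]; ring
  rw [hxy] at h
  calc (∑ k ∈ range (n+1), Polynomial.C ((1-ω)^k) * (X - Polynomial.C ω)^(n-k)) * (X - 1)
      = (∑ j ∈ range (n+1), (X - Polynomial.C ω)^(n+1-1-j)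
          * (Polynomial.C (1-ω) : ℝ[X])^(n+1-1-(n+1-1-j))) * (X - 1) := by
        congr 1
        refine Finset.sum_congr rfl fun k hk => ?_
        simp only [mem_range] at hk
        have e1 : n + 1 - 1 - k = n - k := by omega
        have e2 : n + 1 - 1 - (n - k) = k := by omega
        rw [e1, e2, ← _root_.map_pow]
        ring
    _ = (X - Polynomial.C ω)^(n+1) - (Polynomial.C (1-ω) : ℝ[X])^(n+1) := h
    _ = (X - Polynomial.C ω)^(n+1) - Polynomial.C ((1-ω)^(n+1)) := by rw [_root_.map_pow]

theorem stmt13 (n : ℕ) (ω : ℝ) :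
    (∑ j : Fin (n + 1), Polynomial.C (∑ i : Fin (n + 1), Q2mat n ω i j) * X ^ (j : ℕ)
      = ∑ i ∈ Finset.Icc 1 (n + 1),
          Polynomial.C ((1 - ω) ^ (i - 1)) * (X - Polynomial.C ω) ^ (n + 1 - i))
    ∧ (∑ j ∈ Finset.range (n + 1),
        Polynomial.C (∑ s ∈ Finset.range (n + 1 - j),
          (-1 : ℝ) ^ s * (Nat.choose (n + 1) s : ℝ) * ω ^ s) * X ^ j
      = ∑ i ∈ Finset.Icc 1 (n + 1),
          Polynomial.C ((1 - ω) ^ (i - 1)) * (X - Polynomial.C ω) ^ (n + 1 - i)) := by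
  have hne : (X - 1 : ℝ[X]) ≠ 0 := by
    have := Polynomial.X_sub_C_ne_zero (R := ℝ) 1
    simpa using this
  have hicc : (∑ i ∈ Finset.Icc 1 (n + 1),
        Polynomial.C ((1 - ω) ^ (i - 1)) * (X - Polynomial.C ω) ^ (n + 1 - i))
      = ∑ k ∈ range (n+1), Polynomial.C ((1-ω)^k) * (X - Polynomial.C ω)^(n-k) := by
    rw [← Finset.Ico_add_one_right_eq_Icc, Finset.sum_Ico_eq_sum_range]
    refine Finset.sum_congr rfl fun k hk => ?_
    simp only [mem_range] at hk
    have e1 : 1 + k - 1 = k := by omega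
    have e2 : n + 1 - (1 + k) = n - k := by omega
    rw [e1, e2]
  have h2 : (∑ j ∈ Finset.range (n + 1),
        Polynomial.C (∑ s ∈ Finset.range (n + 1 - j),
          (-1 : ℝ) ^ s * (Nat.choose (n + 1) s : ℝ) * ω ^ s) * X ^ j)
      = ∑ i ∈ Finset.Icc 1 (n + 1),
          Polynomial.C ((1 - ω) ^ (i - 1)) * (X - Polynomial.C ω) ^ (n + 1 - i) := by
    rw [hicc]
    exact mul_right_cancel₀ hne ((coreA n ω).trans (coreB n ω).symm)
  refine ⟨?_, h2⟩
  rw [← h2]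
  have hinner : ∀ j : Fin (n+1), (∑ i : Fin (n+1), Q2mat n ω i j)
      = ∑ s ∈ range (n+1-(j:ℕ)), (-1:ℝ)^s * (Nat.choose (n+1) s : ℝ) * ω^s := by
    intro j
    have h0 : (∑ i : Fin (n+1), Q2mat n ω i j)
        = ∑ i ∈ range (n+1), (if (j:ℕ) ≤ i then
            (-1:ℝ)^(i-(j:ℕ)) * (Nat.choose (n+1) (i-(j:ℕ)) : ℝ) * ω^(i-(j:ℕ)) else 0) :=
      Fin.sum_univ_eq_sum_range
        (fun k => if (j:ℕ) ≤ k then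
          (-1:ℝ)^(k-(j:ℕ)) * (Nat.choose (n+1) (k-(j:ℕ)) : ℝ) * ω^(k-(j:ℕ)) else 0) (n+1)
    rw [h0, ← Finset.sum_filter]
    have hf : Finset.filter (fun i => (j:ℕ) ≤ i) (Finset.range (n+1))
        = Finset.Ico (j:ℕ) (n+1) := by
      ext x; simp [Finset.mem_filter, Finset.mem_range, Finset.mem_Ico]; omega
    rw [hf, Finset.sum_Ico_eq_sum_range]
    refine Finset.sum_congr rfl fun s hs => ?_
    have e : (j:ℕ) + s - (j:ℕ) = s := by omega
    rw [e]
  calc ∑ j : Fin (n+1), Polynomial.C (∑ i : Fin (n+1), Q2mat n ω i j) * X ^ (j:ℕ)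
      = ∑ j : Fin (n+1), Polynomial.C (∑ s ∈ range (n+1-(j:ℕ)),
          (-1:ℝ)^s * (Nat.choose (n+1) s : ℝ) * ω^s) * X ^ (j:ℕ) := by
        refine Finset.sum_congr rfl fun j _ => ?_
        rw [hinner j]
    _ = ∑ j ∈ range (n+1), Polynomial.C (∑ s ∈ range (n+1-j),
          (-1:ℝ)^s * (Nat.choose (n+1) s : ℝ) * ω^s) * X ^ j :=
      Fin.sum_univ_eq_sum_range
        (fun j => Polynomial.C (∑ s ∈ range (n+1-j),
          (-1:ℝ)^s * (Nat.choose (n+1) s : ℝ) * ω^s) * X ^ j) (n+1)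
end

section
/- Let n ≥ 1, q ≥ 1, let A0 ∈ ℝ^{n×n}, B0 ∈ ℝ^{n×1}, D0 ∈ ℝ^{n×q}, C0 ∈ ℝ^{1×n}, and assume (A0, C0) is observable with observability matrix T2 (rows C0, C0·A0, …, C0·A0^{n−1}) invertible. Let d : ℕ → ℝ^{q}, u : ℕ → ℝ, and x : ℕ → ℝ^{n} satisfy x(k+1) = A0 x(k) + B0 u(k) + D0 d(k), and set y(k) = C0 x(k). Define x̄ : ℕ → ℝ^{n} componentwise (1-indexed) by x̄_i(k) = C0·A0^{i−1}·x(k) + Σ_{j=1}^{i−1} C0·A0^{i−1−j}·D0·d(k+j−1), and define the total disturbance f_b(k) = Σ_{i=1}^{n} C0·A0^{n−i}·D0·d(k+i−1) − Σ_{i=1}^{n} (C0·A0^{n}·T2⁻¹)_i · ( Σ_{j=1}^{i−1} C0·A0^{i−1−j}·D0·d(k+j−1) ). Then for all k ∈ ℕ: (a) y(k) = x̄_1(k); (b) x̄(k+1) = (T2·A0·T2⁻¹)·x̄(k) + (T2·B0)·u(k) + e_n·f_b(k), where e_n is the last standard basis column vector of ℝ^{n}. -/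
open Matrix

theorem stmt16 (n q : ℕ) (hn : 1 ≤ n) (hq : 1 ≤ q)
    (A0 : Matrix (Fin n) (Fin n) ℝ) (B0 : Matrix (Fin n) (Fin 1) ℝ)
    (D0 : Matrix (Fin n) (Fin q) ℝ) (C0 : Matrix (Fin 1) (Fin n) ℝ)
    (hobs : IsUnit (obsMat A0 C0).det)
    (d : ℕ → Matrix (Fin q) (Fin 1) ℝ) (u : ℕ → ℝ)
    (x : ℕ → Matrix (Fin n) (Fin 1) ℝ)
    (hx : ∀ k, x (k + 1) = A0 * x k + u k • B0 + D0 * d k)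
    (y : ℕ → ℝ) (hy : ∀ k, y k = (C0 * x k) 0 0)
    (xbar : ℕ → Matrix (Fin n) (Fin 1) ℝ)
    (hxbar : ∀ k (i : Fin n), xbar k i 0 =
      (C0 * A0 ^ (i : ℕ) * x k) 0 0
        + ∑ j ∈ Finset.range (i : ℕ),
            (C0 * A0 ^ ((i : ℕ) - 1 - j) * D0 * d (k + j)) 0 0)
    (fb : ℕ → ℝ)
    (hfb : ∀ k, fb k =
      (∑ i ∈ Finset.range n, (C0 * A0 ^ (n - 1 - i) * D0 * d (k + i)) 0 0)
        - ∑ i : Fin n, (C0 * A0 ^ n * (obsMat A0 C0)⁻¹) 0 i *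
            ∑ j ∈ Finset.range (i : ℕ),
              (C0 * A0 ^ ((i : ℕ) - 1 - j) * D0 * d (k + j)) 0 0) :
    (∀ k, y k = xbar k ⟨0, by omega⟩ 0)
    ∧ (∀ k, xbar (k + 1) =
        obsMat A0 C0 * A0 * (obsMat A0 C0)⁻¹ * xbar k + u k • (obsMat A0 C0 * B0)
          + fb k • (Matrix.of fun (i : Fin n) (_ : Fin 1) =>
              if (i : ℕ) = n - 1 then (1 : ℝ) else 0)) := by
  have hTA : ∀ (i m : Fin n), (obsMat A0 C0 * A0) i m = (C0 * A0 ^ ((i : ℕ) + 1)) 0 m := by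
    intro i m
    rw [pow_succ, ← Matrix.mul_assoc, Matrix.mul_apply, Matrix.mul_apply]
    rfl
  have hTv : ∀ (v : Matrix (Fin n) (Fin 1) ℝ) (i : Fin n),
      (obsMat A0 C0 * v) i 0 = (C0 * A0 ^ (i : ℕ) * v) 0 0 := by
    intro v i
    rw [Matrix.mul_apply, Matrix.mul_apply]
    rfl
  have key : ∀ (v : Matrix (Fin n) (Fin 1) ℝ) (i : Fin n),
      (obsMat A0 C0 * A0 * (obsMat A0 C0)⁻¹ * v) i 0 =
      if h : (i : ℕ) + 1 < n then v ⟨(i : ℕ) + 1, h⟩ 0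
      else ∑ m : Fin n, (C0 * A0 ^ n * (obsMat A0 C0)⁻¹) 0 m * v m 0 := by
    intro v i
    have h1 : obsMat A0 C0 * A0 * (obsMat A0 C0)⁻¹ * v
        = (obsMat A0 C0 * A0) * ((obsMat A0 C0)⁻¹ * v) := by
      rw [Matrix.mul_assoc]
    rw [h1, Matrix.mul_apply]
    by_cases h : (i : ℕ) + 1 < n
    · rw [dif_pos h]
      calc ∑ m, (obsMat A0 C0 * A0) i m * ((obsMat A0 C0)⁻¹ * v) m 0
          = ∑ m, obsMat A0 C0 ⟨(i : ℕ) + 1, h⟩ m * ((obsMat A0 C0)⁻¹ * v) m 0 :=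
            Finset.sum_congr rfl (fun m _ => by rw [hTA i m]; rfl)
        _ = (obsMat A0 C0 * ((obsMat A0 C0)⁻¹ * v)) ⟨(i : ℕ) + 1, h⟩ 0 :=
            (Matrix.mul_apply).symm
        _ = v ⟨(i : ℕ) + 1, h⟩ 0 := by
            rw [← Matrix.mul_assoc, Matrix.mul_nonsing_inv _ hobs, Matrix.one_mul]
    · rw [dif_neg h]
      have hin : (i : ℕ) + 1 = n := by omega
      calc ∑ m, (obsMat A0 C0 * A0) i m * ((obsMat A0 C0)⁻¹ * v) m 0
          = ∑ m, (C0 * A0 ^ n) 0 m * ((obsMat A0 C0)⁻¹ * v) m 0 :=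
            Finset.sum_congr rfl (fun m _ => by rw [hTA i m, hin])
        _ = (C0 * A0 ^ n * ((obsMat A0 C0)⁻¹ * v)) 0 0 := (Matrix.mul_apply).symm
        _ = ((C0 * A0 ^ n * (obsMat A0 C0)⁻¹) * v) 0 0 := by
            rw [Matrix.mul_assoc (C0 * A0 ^ n) ((obsMat A0 C0)⁻¹) v]
        _ = ∑ m, (C0 * A0 ^ n * (obsMat A0 C0)⁻¹) 0 m * v m 0 := Matrix.mul_apply
  have hsumgen : ∀ (k i : ℕ),
      ∑ j ∈ Finset.range (i + 1), (C0 * A0 ^ (i + 1 - 1 - j) * D0 * d (k + j)) 0 0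
        = (∑ j ∈ Finset.range i, (C0 * A0 ^ (i - 1 - j) * D0 * d (k + 1 + j)) 0 0)
          + (C0 * A0 ^ i * D0 * d k) 0 0 := by
    intro k i
    rw [Finset.sum_range_succ']
    congr 1
    · refine Finset.sum_congr rfl fun j hj => ?_
      have e1 : i + 1 - 1 - (j + 1) = i - 1 - j := by omega
      have e2 : k + (j + 1) = k + 1 + j := by omega
      rw [e1, e2]
  have hstep : ∀ (k : ℕ) (i : Fin n),
      (C0 * A0 ^ (i : ℕ) * x (k + 1)) 0 0
        = (C0 * A0 ^ ((i : ℕ) + 1) * x k) 0 0 + u k * (C0 * A0 ^ (i : ℕ) * B0) 0 0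
          + (C0 * A0 ^ (i : ℕ) * D0 * d k) 0 0 := by
    intro k i
    rw [hx, Matrix.mul_add, Matrix.mul_add, Matrix.mul_smul, Matrix.add_apply,
      Matrix.add_apply, Matrix.smul_apply, smul_eq_mul, pow_succ, ← Matrix.mul_assoc,
      Matrix.mul_assoc (C0 * A0 ^ (i : ℕ)) A0 (x k), Matrix.mul_assoc (C0 * A0 ^ (i : ℕ)) D0 (d k)]
    simp [Matrix.mul_assoc]
  constructor
  · intro k
    rw [hy, hxbar]
    simp
  · intro k
    ext i j
    have hj : j = 0 := Subsingleton.elim _ _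
    subst hj
    rw [Matrix.add_apply, Matrix.add_apply, Matrix.smul_apply, Matrix.smul_apply,
      smul_eq_mul, smul_eq_mul, key, hTv, hxbar, hstep, Matrix.of_apply]
    by_cases h : (i : ℕ) + 1 < n
    · rw [dif_pos h, if_neg (by omega : ¬ (i : ℕ) = n - 1), hxbar]
      have := hsumgen k (i : ℕ)
      simp only [Nat.add_sub_cancel] at this ⊢
      rw [this]
      ring
    · rw [dif_neg h, if_pos (by omega : (i : ℕ) = n - 1), hfb]
      have hin : (i : ℕ) + 1 = n := by omega
      have hrow : ∑ m : Fin n, (C0 * A0 ^ n * (obsMat A0 C0)⁻¹) 0 m * xbar k m 0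
          = (C0 * A0 ^ n * x k) 0 0
            + ∑ m : Fin n, (C0 * A0 ^ n * (obsMat A0 C0)⁻¹) 0 m *
                ∑ j ∈ Finset.range (m : ℕ),
                  (C0 * A0 ^ ((m : ℕ) - 1 - j) * D0 * d (k + j)) 0 0 := by
        have : ∀ m : Fin n, (C0 * A0 ^ n * (obsMat A0 C0)⁻¹) 0 m * xbar k m 0
            = (C0 * A0 ^ n * (obsMat A0 C0)⁻¹) 0 m * (obsMat A0 C0 * x k) m 0
              + (C0 * A0 ^ n * (obsMat A0 C0)⁻¹) 0 m *
                ∑ j ∈ Finset.range (m : ℕ),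
                  (C0 * A0 ^ ((m : ℕ) - 1 - j) * D0 * d (k + j)) 0 0 := by
          intro m
          rw [hxbar, hTv, mul_add]
        rw [Finset.sum_congr rfl (fun m _ => this m), Finset.sum_add_distrib]
        congr 1
        calc ∑ m : Fin n, (C0 * A0 ^ n * (obsMat A0 C0)⁻¹) 0 m * (obsMat A0 C0 * x k) m 0
            = ((C0 * A0 ^ n * (obsMat A0 C0)⁻¹) * (obsMat A0 C0 * x k)) 0 0 :=
              (Matrix.mul_apply).symm
          _ = (C0 * A0 ^ n * x k) 0 0 := by
              rw [← Matrix.mul_assoc, Matrix.mul_assoc (C0 * A0 ^ n),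
                Matrix.nonsing_inv_mul _ hobs, Matrix.mul_one]
      rw [hrow]
      have hs : ∑ t ∈ Finset.range n, (C0 * A0 ^ (n - 1 - t) * D0 * d (k + t)) 0 0
          = (∑ j ∈ Finset.range (i : ℕ), (C0 * A0 ^ ((i : ℕ) - 1 - j) * D0 * d (k + 1 + j)) 0 0)
            + (C0 * A0 ^ (i : ℕ) * D0 * d k) 0 0 := by
        have hg := hsumgen k (i : ℕ)
        rw [hin] at hg
        exact hg
      rw [hs, hin]
      ring
  done
end
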